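/- arXiv:2401.12216 — 5 statements merged into one kernel-verified Lean document; each statement's English description precedes it below -/
import Mathlib

section
/- (ERM lower bound, Proposition 2.6) For all ε∞ ∈ (0,1) and C∞ ∈ [1,∞) such that √C∞ · ε∞ ≤ 1/2, and for all ζ > 0 sufficiently small, there exist distributions D_train, D_test over X × ℝ and a function class F with |F| = 2 satisfying covariate shift, density ratio bound C∞, L∞-misspecification at level ε∞, and boundedness, such that the population empirical risk minimizer f̂^∞_ERM satisfies R_test(f̂^∞_ERM) = C∞ ε∞² − ζ. -/
open MeasureTheory Real

noncomputable def twoPt (s t : ℝ) (x y : ℝ × ℝ) : Measure (ℝ × ℝ) :=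
  ENNReal.ofReal s • Measure.dirac x + ENNReal.ofReal t • Measure.dirac y

lemma twoPt_prob {s t : ℝ} (hs : 0 ≤ s) (ht : 0 ≤ t) (h : s + t = 1) (x y : ℝ × ℝ) :
    IsProbabilityMeasure (twoPt s t x y) := by
  constructor
  simp [twoPt, ← ENNReal.ofReal_add hs ht, h]

lemma integrable_dirac'' (g : ℝ × ℝ → ℝ) (hg : Measurable g) (x : ℝ × ℝ) :
    Integrable g (Measure.dirac x) :=
  ⟨hg.aestronglyMeasurable, by
    simp [HasFiniteIntegral, lintegral_dirac]⟩

lemma integral_twoPt {s t : ℝ} (hs : 0 ≤ s) (ht : 0 ≤ t) (x y : ℝ × ℝ)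
    (g : ℝ × ℝ → ℝ) (hg : Measurable g) :
    ∫ p, g p ∂(twoPt s t x y) = s * g x + t * g y := by
  unfold twoPt
  rw [integral_add_measure, integral_smul_measure, integral_smul_measure,
    integral_dirac, integral_dirac, ENNReal.toReal_ofReal hs, ENNReal.toReal_ofReal ht]
  · simp
  · exact (integrable_dirac'' g hg x).smul_measure ENNReal.ofReal_ne_top
  · exact (integrable_dirac'' g hg y).smul_measure ENNReal.ofReal_ne_top

lemma ae_twoPt {s t : ℝ} (x y : ℝ × ℝ) {p : ℝ × ℝ → Prop}
    (hp : MeasurableSet {q | p q}) (hx : p x) (hy : p y) :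
    ∀ᵐ q ∂(twoPt s t x y), p q := by
  unfold twoPt
  rw [ae_add_measure_iff]
  constructor <;> refine Measure.ae_smul_measure ?_ _ <;> rw [ae_dirac_iff hp] <;> assumption

lemma map_twoPt (s t : ℝ) (x y : ℝ × ℝ) :
    (twoPt s t x y).map Prod.fst
      = ENNReal.ofReal s • Measure.dirac x.1 + ENNReal.ofReal t • Measure.dirac y.1 := by
  unfold twoPt
  rw [Measure.map_add _ _ measurable_fst, Measure.map_smul, Measure.map_smul,
    Measure.map_dirac' measurable_fst, Measure.map_dirac' measurable_fst]

lemma condexp_twoPt (μ : Measure (ℝ × ℝ)) (h0 : (fun p : ℝ × ℝ => p.2) =ᵐ[μ] 0) :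
    (fun p : ℝ × ℝ => (0 : ℝ))
      =ᵐ[μ] μ[(fun p : ℝ × ℝ => p.2) | MeasurableSpace.comap Prod.fst inferInstance] := by
  have h := condExp_congr_ae (m := MeasurableSpace.comap Prod.fst inferInstance) h0
  rw [condExp_zero] at h
  exact h.symm


/-- **ERM lower bound (Proposition 2.6).**
For all `ε ∈ (0,1)` and `Cinf ∈ [1,∞)` with `√Cinf · ε ≤ 1/2`, and all sufficiently small `ζ > 0`,
there exist distributions `Dtrain, Dtest` over `X × ℝ` (here `X = ℝ`) and a function class `F` with
`|F| = 2` satisfying covariate shift, density ratio bound `Cinf`, `L∞`-misspecification at level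
`ε`, and boundedness, such that every population empirical risk minimizer `fhat` (minimizer of the
`L²(Dtrain)` distance to `fstar` over `F`) satisfies `R_test(fhat) = Cinf ε² − ζ`. -/
theorem erm_lower_bound
    (ε Cinf : ℝ) (hε : ε ∈ Set.Ioo (0 : ℝ) 1) (hC : 1 ≤ Cinf)
    (hCe : Real.sqrt Cinf * ε ≤ 1 / 2) :
    ∃ ζ₀ > (0 : ℝ), ∀ ζ : ℝ, 0 < ζ → ζ < ζ₀ →
      ∃ (Dtrain Dtest : Measure (ℝ × ℝ)) (fstar : ℝ → ℝ) (F : Finset (ℝ → ℝ)),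
        IsProbabilityMeasure Dtrain ∧ IsProbabilityMeasure Dtest ∧
        Measurable fstar ∧
        F.card = 2 ∧
        -- covariate shift: shared Bayes regression function
        ((fun p : ℝ × ℝ => fstar p.1)
          =ᵐ[Dtrain] Dtrain[(fun p : ℝ × ℝ => p.2) |
            MeasurableSpace.comap Prod.fst inferInstance]) ∧
        ((fun p : ℝ × ℝ => fstar p.1)
          =ᵐ[Dtest] Dtest[(fun p : ℝ × ℝ => p.2) |
            MeasurableSpace.comap Prod.fst inferInstance]) ∧
        -- bounded density ratio
        (Dtest.map Prod.fst ≤ ENNReal.ofReal Cinf • Dtrain.map Prod.fst) ∧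
        -- `L∞`-misspecification at level ε
        (∃ fbar ∈ F, ∀ x, |fbar x - fstar x| ≤ ε) ∧
        -- boundedness and measurability
        (∀ f ∈ F, ∀ x, |f x| ≤ 1) ∧
        (∀ f ∈ F, Measurable f) ∧
        (∀ᵐ p ∂Dtrain, |p.2| ≤ 1) ∧
        (∀ᵐ p ∂Dtest, |p.2| ≤ 1) ∧
        -- every population ERM suffers misspecification amplification
        (∀ fhat ∈ F,
          (∀ g ∈ F, ∫ p, (fhat p.1 - fstar p.1) ^ 2 ∂Dtrain
              ≤ ∫ p, (g p.1 - fstar p.1) ^ 2 ∂Dtrain) →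
          ∫ p, (fhat p.1 - fstar p.1) ^ 2 ∂Dtest = Cinf * ε ^ 2 - ζ) := by
  classical
  obtain ⟨hε0, hε1⟩ := hε
  have hC0 : (0 : ℝ) < Cinf := lt_of_lt_of_le one_pos hC
  refine ⟨Cinf * ε ^ 2, by positivity, fun ζ hζ0 hζ1 => ?_⟩
  obtain ⟨δ, hδdef⟩ : ∃ δ : ℝ, δ = ε ^ 2 - ζ / Cinf := ⟨_, rfl⟩
  have hδ0 : 0 < δ := by
    have : ζ / Cinf < ε ^ 2 := (div_lt_iff₀ hC0).mpr (by linarith [hζ1])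
    linarith
  have hCδ : Cinf * δ = Cinf * ε ^ 2 - ζ := by
    rw [hδdef, mul_sub, mul_div_assoc', mul_div_cancel_left₀ ζ hC0.ne']
  have hCe2 : Cinf * ε ^ 2 ≤ 1 / 4 := by
    have h1 := mul_self_le_mul_self (by positivity) hCe
    have h2 : Real.sqrt Cinf * Real.sqrt Cinf = Cinf := Real.mul_self_sqrt hC0.le
    nlinarith
  have hCδ1 : Cinf * δ < 1 := by rw [hCδ]; linarith
  have hCδ0 : 0 < Cinf * δ := by positivity
  have hδ1 : δ < 1 := by nlinarith
  have hδε : δ < ε ^ 2 := by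
    have : 0 < ζ / Cinf := by positivity
    linarith
  -- function class
  set f1 : ℝ → ℝ := fun x => if x = 1 then 1 else 0 with hf1def
  set f2 : ℝ → ℝ := fun _ => ε with hf2def
  have hf1m : Measurable f1 := Measurable.ite (measurableSet_eq) measurable_const measurable_const
  have hf2m : Measurable f2 := measurable_const
  have hne : f1 ≠ f2 := by
    intro h
    have := congrFun h 1
    simp [hf1def, hf2def] at this
    exact absurd this.symm (ne_of_lt hε1)
  set Dtrain := twoPt (1 - δ) δ ((0 : ℝ), (0 : ℝ)) ((1 : ℝ), (0 : ℝ)) with hDtr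
  set Dtest := twoPt (1 - Cinf * δ) (Cinf * δ) ((0 : ℝ), (0 : ℝ)) ((1 : ℝ), (0 : ℝ)) with hDte
  have hy0set : MeasurableSet {q : ℝ × ℝ | q.2 = 0} :=
    measurable_snd (measurableSet_singleton (0 : ℝ))
  have hy0tr : (fun p : ℝ × ℝ => p.2) =ᵐ[Dtrain] 0 :=
    ae_twoPt _ _ hy0set rfl rfl
  have hy0te : (fun p : ℝ × ℝ => p.2) =ᵐ[Dtest] 0 :=
    ae_twoPt _ _ hy0set rfl rfl
  refine ⟨Dtrain, Dtest, fun _ => 0, {f1, f2}, ?_, ?_, measurable_const, ?_, ?_, ?_, ?_, ?_, ?_, ?_, ?_, ?_, ?_⟩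
  · exact twoPt_prob (by linarith) hδ0.le (by ring) _ _
  · exact twoPt_prob (by linarith) hCδ0.le (by ring) _ _
  · rw [Finset.card_insert_of_notMem (by simpa using hne), Finset.card_singleton]
  · exact condexp_twoPt _ hy0tr
  · exact condexp_twoPt _ hy0te
  · -- density ratio
    rw [hDtr, hDte, map_twoPt, map_twoPt]
    rw [Measure.le_iff]
    intro s hs
    simp only [Measure.coe_add, Pi.add_apply, Measure.smul_apply, smul_eq_mul]
    have e1 : ENNReal.ofReal Cinf * (ENNReal.ofReal (1 - δ) * Measure.dirac (0 : ℝ) s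
          + ENNReal.ofReal δ * Measure.dirac (1 : ℝ) s)
        = ENNReal.ofReal (Cinf * (1 - δ)) * Measure.dirac (0 : ℝ) s
          + ENNReal.ofReal (Cinf * δ) * Measure.dirac (1 : ℝ) s := by
      rw [mul_add, ← mul_assoc, ← mul_assoc, ← ENNReal.ofReal_mul hC0.le,
        ← ENNReal.ofReal_mul hC0.le]
    rw [e1]
    refine add_le_add (mul_le_mul_left (ENNReal.ofReal_le_ofReal ?_) _) le_rfl
    nlinarith
  · -- misspecification
    refine ⟨f2, by simp, fun x => ?_⟩
    simp [hf2def, abs_of_pos hε0, le_refl]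
  · -- boundedness
    intro f hf x
    rcases Finset.mem_insert.mp hf with h | h
    · subst h; simp only [hf1def]; split <;> norm_num
    · rw [Finset.mem_singleton] at h; subst h
      simp only [hf2def]; rw [abs_of_pos hε0]; linarith
  · intro f hf
    rcases Finset.mem_insert.mp hf with h | h
    · subst h; exact hf1m
    · rw [Finset.mem_singleton] at h; subst h; exact hf2m
  · exact ae_twoPt _ _ (measurable_snd.norm measurableSet_Iic) (by norm_num) (by norm_num)
  · exact ae_twoPt _ _ (measurable_snd.norm measurableSet_Iic) (by norm_num) (by norm_num)
  · -- ERM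
    intro fhat hfhat hmin
    have hint : ∀ (f : ℝ → ℝ), Measurable f → ∀ (s t : ℝ), 0 ≤ s → 0 ≤ t →
        ∫ p, (f p.1 - 0) ^ 2 ∂(twoPt s t ((0:ℝ),(0:ℝ)) ((1:ℝ),(0:ℝ)))
          = s * (f 0) ^ 2 + t * (f 1) ^ 2 := by
      intro f hfm s t hs ht
      rw [integral_twoPt hs ht ((0:ℝ),(0:ℝ)) ((1:ℝ),(0:ℝ)) (fun p => (f p.1 - 0) ^ 2)
        (by exact ((hfm.comp measurable_fst).sub measurable_const).pow_const 2)]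
      norm_num
    have hf10 : f1 0 = 0 := by simp [hf1def]
    have hf11 : f1 1 = 1 := by simp [hf1def]
    have htr1 : ∫ p, (f1 p.1 - 0) ^ 2 ∂Dtrain = δ := by
      rw [hDtr, hint f1 hf1m _ _ (by linarith) hδ0.le, hf10, hf11]; ring
    have htr2 : ∫ p, (f2 p.1 - 0) ^ 2 ∂Dtrain = ε ^ 2 := by
      rw [hDtr, hint f2 hf2m _ _ (by linarith) hδ0.le]; simp only [hf2def]; ring
    rcases Finset.mem_insert.mp hfhat with h | h
    · subst h
      rw [hDte, hint f1 hf1m _ _ (by linarith) hCδ0.le, hf10, hf11]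
      rw [← hCδ]; ring
    · rw [Finset.mem_singleton] at h; subst h
      exfalso
      have := hmin f1 (Finset.mem_insert_self _ _)
      rw [htr1, htr2] at this
      linarith
end

section
/- (Well-specified case, Corollary 3.2) Fix δ ∈ (0,1), let Δ := 160 log(2|F|/δ)/(3n), and assume covariate shift, density ratio bound C∞, boundedness, and exact realizability (ε∞ = 0, i.e. f* ∈ F). Then with probability at least 1 − δ over the n i.i.d. training samples, the disagreement-based regression estimator f̂_DBR with any τ satisfying 0 < τ ≤ √Δ satisfies R_train(f̂_DBR) ≤ 2Δ and R_test(f̂_DBR) ≤ 2 C∞ Δ. -/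
open MeasureTheory Real

noncomputable section

/-- The disagreement filter `W^τ_{f,g}(x) = 1{|f(x) − g(x)| ≥ τ}`. -/
def disagreementFilter {X : Type} (τ : ℝ) (f g : X → ℝ) (x : X) : ℝ :=
  if τ ≤ |f x - g x| then 1 else 0

/-- The empirical disagreement-based objective
`L̂(f;g) = (1/n) Σ_i W^τ_{f,g}(x_i) [(f(x_i) − y_i)² − (g(x_i) − y_i)²]`. -/
def empObj {X : Type} (τ : ℝ) (f g : X → ℝ) {n : ℕ} (ω : Fin n → X × ℝ) : ℝ :=
  (1 / n : ℝ) * ∑ i, disagreementFilter τ f g (ω i).1 *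
    ((f (ω i).1 - (ω i).2) ^ 2 - (g (ω i).1 - (ω i).2) ^ 2)

/-- `fhat` is a disagreement-based regression (DBR) estimator on the sample `ω`:
it minimizes `max_{g ∈ F} L̂(f; g)` over `f ∈ F`. -/
def IsDBR {X : Type} (τ : ℝ) (F : Finset (X → ℝ)) (hF : F.Nonempty) {n : ℕ}
    (ω : Fin n → X × ℝ) (fhat : X → ℝ) : Prop :=
  fhat ∈ F ∧ ∀ f ∈ F,
    F.sup' hF (fun g => empObj τ fhat g ω) ≤ F.sup' hF (fun g => empObj τ f g ω)

open Filter
open scoped ENNReal NNReal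

lemma factorial_ge (k : ℕ) : 2 * 3 ^ k ≤ (k+2).factorial := by
  induction k with
  | zero => norm_num
  | succ k ih =>
    have e : (k+1+2).factorial = (k+3) * (k+2).factorial := by
      rw [show k+1+2 = (k+2)+1 from rfl, Nat.factorial_succ]
    rw [e]
    calc 2 * 3 ^ (k+1) = 3 * (2 * 3 ^ k) := by ring
    _ ≤ 3 * (k+2).factorial := Nat.mul_le_mul_left 3 ih
    _ ≤ (k+3) * (k+2).factorial := Nat.mul_le_mul_right _ (by omega)

set_option maxHeartbeats 1000000 in
lemma exp_le_quad {x c : ℝ} (hx : x ≤ c) (hc0 : 0 ≤ c) (hc3 : c < 3) :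
    Real.exp x ≤ 1 + x + x ^ 2 / (2 * (1 - c / 3)) := by
  have hD : 0 < 2 * (1 - c / 3) := by nlinarith
  rcases le_or_gt x 0 with h0 | h0
  · have key : Real.exp x ≤ 1 + x + x ^ 2 / 2 := by
      have hmono : AntitoneOn (fun t => 1 + t + t ^ 2 / 2 - Real.exp t) (Set.Iic 0) := by
        apply antitoneOn_of_deriv_nonpos (convex_Iic 0)
        · exact Continuous.continuousOn (by continuity)
        · intro t _
          exact (DifferentiableAt.differentiableWithinAt (by fun_prop))
        · intro t ht
          rw [interior_Iic] at ht
          have h1 : HasDerivAt (fun t : ℝ => 1 + t + t ^ 2 / 2 - Real.exp t)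
              (1 + t - Real.exp t) t := by
            have := (((hasDerivAt_const t (1:ℝ)).add (hasDerivAt_id t)).add
              ((hasDerivAt_pow 2 t).div_const 2)).sub (Real.hasDerivAt_exp t)
            exact this.congr_deriv (by push_cast; ring)
          rw [h1.deriv]
          have := Real.add_one_le_exp t
          linarith
      have := hmono (Set.mem_Iic.2 h0) (Set.mem_Iic.2 le_rfl) h0
      simpa using this
    have : x ^ 2 / 2 ≤ x ^ 2 / (2 * (1 - c / 3)) := by
      apply div_le_div_of_nonneg_left (by positivity) hD
      nlinarith
    linarith
  · have hsum : Real.exp x = ∑' k : ℕ, x ^ k / k.factorial := by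
      rw [Real.exp_eq_exp_ℝ, NormedSpace.exp_eq_tsum_div]
    have hS : Summable (fun k : ℕ => x ^ k / k.factorial) := Real.summable_pow_div_factorial x
    have hS2 : Summable (fun k : ℕ => x ^ (k+2) / ((k+2).factorial : ℝ)) :=
      ((summable_nat_add_iff 2).2 hS :)
    have hsplit : (∑ k ∈ Finset.range 2, x ^ k / k.factorial)
        + ∑' k : ℕ, x ^ (k+2) / ((k+2).factorial : ℝ) = ∑' k : ℕ, x ^ k / k.factorial :=
      Summable.sum_add_tsum_nat_add 2 hS
    have hgeo : Summable (fun k : ℕ => x ^ 2 / 2 * (c / 3) ^ k) :=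
      Summable.mul_left _ (summable_geometric_of_lt_one (by positivity) (by linarith))
    have hterm : ∀ k : ℕ, x ^ (k+2) / ((k+2).factorial : ℝ) ≤ x ^ 2 / 2 * (c / 3) ^ k := by
      intro k
      have h2 : x ^ k ≤ c ^ k := pow_le_pow_left₀ h0.le hx k
      have h3 : (2:ℝ) * 3 ^ k ≤ ((k+2).factorial : ℝ) := by
        exact_mod_cast factorial_ge k
      have hf : (0:ℝ) < ((k+2).factorial : ℝ) := by
        exact_mod_cast Nat.factorial_pos (k+2)
      rw [div_le_iff₀ hf]
      have key : x ^ 2 / 2 * (c / 3) ^ k * (2 * 3 ^ k) = x ^ 2 * c ^ k := by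
        rw [div_pow]; field_simp
      calc x ^ (k+2) = x ^ 2 * x ^ k := by ring
      _ ≤ x ^ 2 * c ^ k := by nlinarith [sq_nonneg x, pow_nonneg h0.le k]
      _ = x ^ 2 / 2 * (c / 3) ^ k * (2 * 3 ^ k) := key.symm
      _ ≤ x ^ 2 / 2 * (c / 3) ^ k * ((k+2).factorial : ℝ) := by
          apply mul_le_mul_of_nonneg_left h3; positivity
    have htail : ∑' k : ℕ, x ^ (k+2) / ((k+2).factorial : ℝ) ≤ x ^ 2 / (2 * (1 - c / 3)) := by
      calc ∑' k : ℕ, x ^ (k+2) / ((k+2).factorial : ℝ)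
          ≤ ∑' k : ℕ, x ^ 2 / 2 * (c / 3) ^ k := Summable.tsum_le_tsum hterm hS2 hgeo
      _ = x ^ 2 / 2 * (1 - c / 3)⁻¹ := by
          rw [tsum_mul_left, tsum_geometric_of_lt_one (by positivity) (by linarith)]
      _ = x ^ 2 / (2 * (1 - c / 3)) := by
          have h3c : (3:ℝ) - c ≠ 0 := by linarith
          rw [eq_div_iff (ne_of_gt hD)]
          field_simp
    have hhead : (∑ k ∈ Finset.range 2, x ^ k / (k.factorial : ℝ)) = 1 + x := by
      simp [Finset.sum_range_succ]
    rw [hsum, ← hsplit, hhead]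
    linarith

lemma integrable_of_bddae {Ω : Type} [MeasurableSpace Ω] (μ : Measure Ω) [IsProbabilityMeasure μ]
    {f : Ω → ℝ} (hf : Measurable f) {C : ℝ} (hb : ∀ᵐ p ∂μ, |f p| ≤ C) : Integrable f μ :=
  Integrable.mono' (integrable_const C) hf.aestronglyMeasurable
    (by filter_upwards [hb] with p hp using by simpa using hp)

lemma mgf_le {Ω : Type} [MeasurableSpace Ω] (μ : Measure Ω) [IsProbabilityMeasure μ]
    (W : Ω → ℝ) (hW : Measurable W) (hWb : ∀ᵐ p ∂μ, |W p| ≤ 8)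
    (hmean : ∫ p, W p ∂μ = 0) (s2 : ℝ) (hs2 : ∫ p, (W p) ^ 2 ∂μ ≤ s2)
    (l : ℝ) (hl : 0 ≤ l) (hc : 8 * l < 3) :
    ∫ p, Real.exp (l * W p) ∂μ ≤ Real.exp (s2 * l ^ 2 / (2 * (1 - 8 * l / 3))) := by
  have hDpos : 0 < 2 * (1 - 8 * l / 3) := by nlinarith
  set h : ℝ := 1 / (2 * (1 - 8 * l / 3)) with hh
  have hhpos : 0 < h := by positivity
  have hiW : Integrable W μ := integrable_of_bddae μ hW hWb
  have hiW2 : Integrable (fun p => (W p) ^ 2) μ := by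
    refine integrable_of_bddae μ (hW.pow_const 2) (C := 64) ?_
    filter_upwards [hWb] with p hp
    calc |W p ^ 2| = |W p| ^ 2 := by rw [abs_pow]
    _ ≤ 8 ^ 2 := pow_le_pow_left₀ (abs_nonneg _) hp 2
    _ = 64 := by norm_num
  have hiexp : Integrable (fun p => Real.exp (l * W p)) μ := by
    refine integrable_of_bddae μ (by fun_prop) (C := Real.exp (8 * l)) ?_
    filter_upwards [hWb] with p hp
    rw [abs_of_pos (Real.exp_pos _)]
    exact Real.exp_le_exp.2 (by nlinarith [abs_le.1 hp])
  have hpt : ∀ᵐ p ∂μ, Real.exp (l * W p) ≤ 1 + l * W p + (l * W p) ^ 2 * h := by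
    filter_upwards [hWb] with p hp
    have := exp_le_quad (x := l * W p) (c := 8 * l) (by nlinarith [abs_le.1 hp]) (by positivity) hc
    calc Real.exp (l * W p) ≤ 1 + l * W p + (l * W p) ^ 2 / (2 * (1 - 8 * l / 3)) := this
    _ = 1 + l * W p + (l * W p) ^ 2 * h := by rw [hh]; ring
  have efun : (fun p => 1 + l * W p + (l * W p) ^ 2 * h)
      = fun p => (1 + l * W p) + (l ^ 2 * h) * (W p) ^ 2 := funext fun p => by ring
  have hig1 : Integrable (fun p => 1 + l * W p) μ := (integrable_const 1).add (hiW.const_mul l)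
  have hig2 : Integrable (fun p => (l ^ 2 * h) * (W p) ^ 2) μ := hiW2.const_mul _
  have hig : Integrable (fun p => (1 + l * W p) + (l ^ 2 * h) * (W p) ^ 2) μ := hig1.add hig2
  have hint : ∫ p, (1 + l * W p + (l * W p) ^ 2 * h) ∂μ = 1 + s2 * l ^ 2 * h
      - (s2 - ∫ p, (W p) ^ 2 ∂μ) * l ^ 2 * h := by
    rw [efun, integral_add hig1 hig2, integral_add (integrable_const 1) (hiW.const_mul l),
      integral_const_mul, integral_const_mul, hmean]
    simp only [integral_const, probReal_univ, measure_univ, ENNReal.toReal_one, smul_eq_mul, mul_one, mul_zero]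
    ring
  calc ∫ p, Real.exp (l * W p) ∂μ
      ≤ ∫ p, (1 + l * W p + (l * W p) ^ 2 * h) ∂μ := by
        refine integral_mono_ae hiexp ?_ hpt
        rw [efun]; exact hig
    _ ≤ 1 + s2 * l ^ 2 * h := by
        rw [hint]
        have : 0 ≤ (s2 - ∫ p, (W p) ^ 2 ∂μ) * l ^ 2 * h := by
          apply mul_nonneg (mul_nonneg (by linarith) (sq_nonneg l)) hhpos.le
        linarith
    _ ≤ Real.exp (s2 * l ^ 2 * h) := by
        have := Real.add_one_le_exp (s2 * l ^ 2 * h)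
        linarith
    _ = Real.exp (s2 * l ^ 2 / (2 * (1 - 8 * l / 3))) := by rw [hh]; ring_nf

set_option maxHeartbeats 1000000 in
lemma bernstein_pi {Ω : Type} [MeasurableSpace Ω] (μ : Measure Ω) [IsProbabilityMeasure μ]
    (Z : Ω → ℝ) (hZ : Measurable Z) (hZb : ∀ᵐ p ∂μ, |Z p| ≤ 4)
    (v : ℝ) (hv : 0 ≤ v) (hv4 : v ≤ 4) (hmean : ∫ p, Z p ∂μ = -v)
    (hsq : ∫ p, (Z p) ^ 2 ∂μ ≤ 8 * v)
    (L : ℝ) (hL : 0 < L) (n : ℕ) (hn : 0 < n) :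
    (Measure.pi fun _ : Fin n => μ)
      {ω | -v + (Real.sqrt (16 * v * L / n) + 16 * L / (3 * n)) ≤ (1 / n : ℝ) * ∑ i, Z (ω i)}
      ≤ ENNReal.ofReal (Real.exp (-L)) := by
  have hnR : (0:ℝ) < n := by exact_mod_cast hn
  set s : ℝ := Real.sqrt (16 * v * L / n) with hs
  set u : ℝ := 16 * L / (3 * n) with hu
  have hs0 : 0 ≤ s := Real.sqrt_nonneg _
  have hssq : s ^ 2 = 16 * v * L / n := Real.sq_sqrt (by positivity)
  have hu0 : 0 < u := by rw [hu]; positivity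
  clear_value s u
  set t : ℝ := s + u with ht
  have ht0 : 0 < t := by rw [ht]; linarith
  clear_value t
  set P := Measure.pi fun _ : Fin n => μ with hP
  have hPprob : IsProbabilityMeasure P := by rw [hP]; infer_instance
  have hiZ : Integrable Z μ := integrable_of_bddae μ hZ hZb
  have hiZ2 : Integrable (fun p => (Z p) ^ 2) μ := by
    refine integrable_of_bddae μ (hZ.pow_const 2) (C := 16) ?_
    filter_upwards [hZb] with p hp
    calc |Z p ^ 2| = |Z p| ^ 2 := by rw [abs_pow]
    _ ≤ 4 ^ 2 := pow_le_pow_left₀ (abs_nonneg _) hp 2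
    _ = 16 := by norm_num
  rcases eq_or_lt_of_le hv with hv0 | hvpos
  · -- v = 0 : Z = 0 a.e.
    have hZ0 : ∀ᵐ p ∂μ, Z p = 0 := by
      have hZ2 : ∫ p, (Z p) ^ 2 ∂μ ≤ 0 := by rw [← hv0] at hsq; linarith
      have := (integral_eq_zero_iff_of_nonneg (fun p => sq_nonneg (Z p)) hiZ2).1
        (le_antisymm hZ2 (integral_nonneg fun p => sq_nonneg _))
      filter_upwards [this] with p hp
      exact pow_eq_zero_iff (by norm_num) |>.1 hp
    have hall : ∀ᵐ ω ∂P, ∀ i, Z (ω i) = 0 := by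
      rw [hP]
      exact eventually_all.2 fun i => (Measure.tendsto_eval_ae_ae (μ := fun _ : Fin n => μ) (i := i)).eventually hZ0
    have hsub : {ω : Fin n → Ω | -v + t ≤ (1 / n : ℝ) * ∑ i, Z (ω i)}
        ⊆ {ω | ¬ ∀ i, Z (ω i) = 0} := by
      intro ω hω hzero
      simp only [Set.mem_setOf_eq] at hω
      rw [Finset.sum_congr rfl fun i _ => hzero i, Finset.sum_const] at hω
      have hs' : s = 0 := by rw [hs, ← hv0]; simp
      rw [← hv0] at hω
      rw [ht, hs'] at hω
      simp at hω
      linarith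
    rw [ae_iff] at hall
    exact le_trans (le_trans (measure_mono hsub) (le_of_eq hall)) zero_le
  · -- v > 0
    have hden : (0:ℝ) < 8 * v + 8 * t / 3 := by positivity
    set l : ℝ := t / (8 * v + 8 * t / 3) with hl
    have hlpos : 0 < l := by rw [hl]; positivity
    have hlc : 8 * l < 3 := by
      rw [hl, mul_div_assoc', div_lt_iff₀ hden]
      nlinarith
    clear_value l
    set W : Ω → ℝ := fun p => Z p + v with hW
    have hWmeas : Measurable W := hZ.add_const v
    have hWb : ∀ᵐ p ∂μ, |W p| ≤ 8 := by
      filter_upwards [hZb] with p hp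
      have h1 := abs_le.1 hp
      rw [hW, abs_le]
      constructor <;> simp <;> nlinarith
    have hWmean : ∫ p, W p ∂μ = 0 := by
      rw [hW, integral_add hiZ (integrable_const v), hmean, integral_const]
      simp
    have hWsq : ∫ p, (W p) ^ 2 ∂μ ≤ 8 * v := by
      have hig1 : Integrable (fun p => 2 * v * Z p + v ^ 2) μ :=
        (hiZ.const_mul (2 * v)).add (integrable_const _)
      have e : (fun p => (W p) ^ 2) = fun p => (Z p) ^ 2 + (2 * v * Z p + v ^ 2) :=
        funext fun p => by rw [hW]; ring
      rw [e, integral_add hiZ2 hig1,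
        integral_add (hiZ.const_mul (2 * v)) (integrable_const _), integral_const_mul,
        hmean, integral_const]
      simp only [probReal_univ, measure_univ, ENNReal.toReal_one, smul_eq_mul, one_mul]
      nlinarith [sq_nonneg v]
    have hmgf := mgf_le μ W hWmeas hWb hWmean (8 * v) hWsq l hlpos.le hlc
    have hkey : (8 * v) * l ^ 2 / (2 * (1 - 8 * l / 3)) = l * t / 2 := by
      rw [hl]
      rw [div_eq_div_iff (by rw [← hl]; nlinarith) (by norm_num)]
      field_simp
      ring
    have h16L : 16 * L = 3 * (n:ℝ) * u := by rw [hu]; field_simp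
    have hns : (n:ℝ) * s ^ 2 = 16 * v * L := by rw [hssq]; field_simp
    have hLle : L ≤ n * (l * t / 2) := by
      have e : (n:ℝ) * (l * t / 2) = 3 * n * t ^ 2 / (16 * (3 * v + t)) := by
        rw [hl]; field_simp; ring
      rw [e, le_div_iff₀ (by positivity)]
      have et : t ^ 2 = s ^ 2 + u * t + s * u := by rw [ht]; ring
      nlinarith [mul_nonneg (mul_nonneg hnR.le hs0) hu0.le, mul_nonneg hs0 hu0.le]
    -- Chernoff
    letI : MeasureSpace Ω := ⟨μ⟩
    haveI hsf : SigmaFinite (volume : Measure Ω) := inferInstanceAs (SigmaFinite μ)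
    set f : (Fin n → Ω) → ℝ := fun ω => ∏ i, Real.exp (l * W (ω i)) with hf
    have hfm : Measurable f := by
      rw [hf]
      apply Finset.measurable_prod
      intro i _
      exact Real.measurable_exp.comp ((hWmeas.comp (measurable_pi_apply i)).const_mul l)
    have hblift : ∀ᵐ ω ∂P, ∀ i, |W (ω i)| ≤ 8 := by
      rw [hP]
      exact eventually_all.2 fun i => (Measure.tendsto_eval_ae_ae (μ := fun _ : Fin n => μ) (i := i)).eventually hWb
    have hfb : ∀ᵐ ω ∂P, |f ω| ≤ Real.exp (8 * l) ^ n := by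
      filter_upwards [hblift] with ω hω
      have h0 : 0 ≤ f ω := by
        rw [hf]; exact Finset.prod_nonneg fun i _ => (Real.exp_pos _).le
      rw [abs_of_nonneg h0, hf]
      calc ∏ i, Real.exp (l * W (ω i)) ≤ ∏ _i : Fin n, Real.exp (8 * l) := by
            apply Finset.prod_le_prod (fun i _ => (Real.exp_pos _).le)
            intro i _
            exact Real.exp_le_exp.2 (by nlinarith [abs_le.1 (hω i)])
      _ = Real.exp (8 * l) ^ n := by rw [Finset.prod_const, Finset.card_univ, Fintype.card_fin]
    have hfi : Integrable f P := integrable_of_bddae P hfm hfb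
    have hprod : ∫ ω, f ω ∂P = (∫ p, Real.exp (l * W p) ∂μ) ^ n := by
      have hvol1 : (volume : Measure (Fin n → Ω)) = P := rfl
      have hvol2 : (volume : Measure Ω) = μ := rfl
      have h := MeasureTheory.integral_fintype_prod_eq_pow (ι := Fin n) (μ := μ)
        (fun p : Ω => Real.exp (l * W p))
      rw [Fintype.card_fin] at h
      rw [hf]
      exact h
    set ε : ℝ := Real.exp (l * (n * t)) with hε
    have hεpos : 0 < ε := Real.exp_pos _
    have hsub : {ω : Fin n → Ω | -v + t ≤ (1 / n : ℝ) * ∑ i, Z (ω i)}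
        ⊆ {ω | ε ≤ f ω} := by
      intro ω hω
      simp only [Set.mem_setOf_eq] at hω ⊢
      have hsum : (n:ℝ) * t ≤ ∑ i, W (ω i) := by
        have h1 : (n:ℝ) * (-v + t) ≤ ∑ i, Z (ω i) := by
          calc (n:ℝ) * (-v + t) ≤ (n:ℝ) * ((1 / n : ℝ) * ∑ i, Z (ω i)) :=
              mul_le_mul_of_nonneg_left hω hnR.le
          _ = ∑ i, Z (ω i) := by field_simp
        have h2 : ∑ i, W (ω i) = (∑ i, Z (ω i)) + n * v := by
          rw [hW]
          rw [Finset.sum_add_distrib, Finset.sum_const, Finset.card_univ, Fintype.card_fin,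
            nsmul_eq_mul]
        rw [h2]; linarith
      have hle : ε ≤ Real.exp (l * ∑ i, W (ω i)) := by
        rw [hε]
        exact Real.exp_le_exp.2 (by nlinarith)
      calc ε ≤ Real.exp (l * ∑ i, W (ω i)) := hle
      _ = f ω := by rw [hf, Finset.mul_sum, Real.exp_sum]
    have hmarkov := mul_meas_ge_le_integral_of_nonneg (μ := P)
      (f := f) (by
        refine ae_of_all P fun ω => ?_
        rw [hf]
        exact Finset.prod_nonneg fun i _ => (Real.exp_pos _).le) hfi ε
    have hMnn : 0 ≤ ∫ p, Real.exp (l * W p) ∂μ := integral_nonneg fun p => (Real.exp_pos _).le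
    have hintle : ∫ ω, f ω ∂P ≤ Real.exp ((n:ℝ) * (l * t / 2)) := by
      rw [hprod]
      calc (∫ p, Real.exp (l * W p) ∂μ) ^ n
          ≤ (Real.exp (8 * v * l ^ 2 / (2 * (1 - 8 * l / 3)))) ^ n :=
            pow_le_pow_left₀ hMnn hmgf n
      _ = Real.exp ((n:ℝ) * (l * t / 2)) := by
          rw [← Real.exp_nat_mul, hkey]
    have htR : (P {ω | ε ≤ f ω}).toReal ≤ Real.exp (-L) := by
      have h1 : ε * (P {ω | ε ≤ f ω}).toReal ≤ Real.exp ((n:ℝ) * (l * t / 2)) :=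
        le_trans hmarkov hintle
      have h2 : (P {ω | ε ≤ f ω}).toReal ≤ Real.exp ((n:ℝ) * (l * t / 2)) / ε :=
        (le_div_iff₀ hεpos).2 (by linarith [mul_comm ε (P {ω | ε ≤ f ω}).toReal])
      calc (P {ω | ε ≤ f ω}).toReal ≤ Real.exp ((n:ℝ) * (l * t / 2)) / ε := h2
      _ = Real.exp ((n:ℝ) * (l * t / 2) - l * (n * t)) := by rw [hε, Real.exp_sub]
      _ ≤ Real.exp (-L) := Real.exp_le_exp.2 (by nlinarith)
    refine le_trans (measure_mono hsub) ?_
    rw [ENNReal.le_ofReal_iff_toReal_le (measure_ne_top P _) (Real.exp_pos _).le]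
    exact htR

def Wfn {X : Type} (fstar g : X → ℝ) (τ : ℝ) (x : X) : ℝ := if τ ≤ |fstar x - g x| then 1 else 0

def Zfn {X : Type} (fstar g : X → ℝ) (τ : ℝ) (p : X × ℝ) : ℝ :=
  Wfn fstar g τ p.1 * ((fstar p.1 - p.2) ^ 2 - (g p.1 - p.2) ^ 2)

lemma Wfn_meas {X : Type} [MeasurableSpace X] {fstar g : X → ℝ} (hf : Measurable fstar)
    (hg : Measurable g) (τ : ℝ) : Measurable (Wfn fstar g τ) := by
  unfold Wfn
  exact Measurable.ite (measurableSet_le measurable_const (hf.sub hg).abs)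
    measurable_const measurable_const

lemma Wfn_nonneg {X : Type} (fstar g : X → ℝ) (τ : ℝ) (x : X) : 0 ≤ Wfn fstar g τ x := by
  unfold Wfn; split <;> norm_num

lemma Wfn_le_one {X : Type} (fstar g : X → ℝ) (τ : ℝ) (x : X) : Wfn fstar g τ x ≤ 1 := by
  unfold Wfn; split <;> norm_num

lemma Wfn_sq {X : Type} (fstar g : X → ℝ) (τ : ℝ) (x : X) :
    Wfn fstar g τ x ^ 2 = Wfn fstar g τ x := by
  unfold Wfn; split <;> norm_num

lemma mul_W_bound {w c b : ℝ} (hw0 : 0 ≤ w) (hw1 : w ≤ 1) (hc : |c| ≤ b) : |w * c| ≤ b := by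
  rw [abs_mul]
  have hb : 0 ≤ b := le_trans (abs_nonneg c) hc
  calc |w| * |c| ≤ 1 * b :=
    mul_le_mul (by rwa [abs_of_nonneg hw0]) hc (abs_nonneg _) zero_le_one
  _ = b := one_mul b

lemma tower {X : Type} [MeasurableSpace X] (D : Measure (X × ℝ)) [IsProbabilityMeasure D]
    (fstar : X → ℝ)
    (hB : (fun p : X × ℝ => fstar p.1)
      =ᵐ[D] D[(fun p : X × ℝ => p.2) | MeasurableSpace.comap Prod.fst inferInstance])
    (hY : ∀ᵐ p ∂D, |p.2| ≤ 1)
    (h : X → ℝ) (hh : Measurable h) (M : ℝ) (hbd : ∀ x, |h x| ≤ M) :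
    ∫ p, h p.1 * p.2 ∂D = ∫ p, h p.1 * fstar p.1 ∂D := by
  have hm : MeasurableSpace.comap (Prod.fst : X × ℝ → X) inferInstance
      ≤ (inferInstance : MeasurableSpace (X × ℝ)) :=
    measurable_iff_comap_le.mp measurable_fst
  have hfst : Measurable[MeasurableSpace.comap (Prod.fst : X × ℝ → X) inferInstance]
      (Prod.fst : X × ℝ → X) := fun s hs => ⟨s, hs, rfl⟩
  have hyi : Integrable (fun p : X × ℝ => p.2) D :=
    integrable_of_bddae D measurable_snd hY
  have hhsm : StronglyMeasurable[MeasurableSpace.comap (Prod.fst : X × ℝ → X) inferInstance]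
      (fun p : X × ℝ => h p.1) := (hh.comp hfst).stronglyMeasurable
  have hpull : D[(fun p : X × ℝ => h p.1) * (fun p : X × ℝ => p.2) |
        MeasurableSpace.comap (Prod.fst : X × ℝ → X) inferInstance]
      =ᵐ[D] (fun p : X × ℝ => h p.1) * D[(fun p : X × ℝ => p.2) |
        MeasurableSpace.comap (Prod.fst : X × ℝ → X) inferInstance] :=
    condExp_stronglyMeasurable_mul_of_bound hm hhsm hyi M
      (ae_of_all _ fun p => by simpa using hbd p.1)
  have hint : Integrable (fun p : X × ℝ => h p.1 * p.2) D := by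
    refine integrable_of_bddae D ((hh.comp measurable_fst).mul measurable_snd) (C := |M|) ?_
    filter_upwards [hY] with p hp
    rw [abs_mul]
    have h0 : 0 ≤ |h p.1| := abs_nonneg _
    nlinarith [hbd p.1, abs_nonneg p.2, le_abs_self M]
  have hstep : ∫ p, h p.1 * p.2 ∂D
      = ∫ p, (D[(fun p : X × ℝ => h p.1) * (fun p : X × ℝ => p.2) |
          MeasurableSpace.comap (Prod.fst : X × ℝ → X) inferInstance]) p ∂D :=
    (integral_condExp (f := (fun p : X × ℝ => h p.1) * (fun p : X × ℝ => p.2)) hm).symm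
  rw [hstep, integral_congr_ae hpull]
  refine integral_congr_ae ?_
  filter_upwards [hB] with p hp
  simp only [Pi.mul_apply]
  rw [← hp]

lemma moment_facts {X : Type} [MeasurableSpace X] (D : Measure (X × ℝ)) [IsProbabilityMeasure D]
    (fstar : X → ℝ) (hfstar : Measurable fstar) (hfb : ∀ x, |fstar x| ≤ 1)
    (hB : (fun p : X × ℝ => fstar p.1)
      =ᵐ[D] D[(fun p : X × ℝ => p.2) | MeasurableSpace.comap Prod.fst inferInstance])
    (hY : ∀ᵐ p ∂D, |p.2| ≤ 1)
    (g : X → ℝ) (hg : Measurable g) (hgb : ∀ x, |g x| ≤ 1) (τ : ℝ) :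
    Measurable (Zfn fstar g τ) ∧ (∀ᵐ p ∂D, |Zfn fstar g τ p| ≤ 4) ∧
    (0 ≤ ∫ p, Wfn fstar g τ p.1 * (g p.1 - fstar p.1) ^ 2 ∂D) ∧
    (∫ p, Wfn fstar g τ p.1 * (g p.1 - fstar p.1) ^ 2 ∂D ≤ 4) ∧
    (∫ p, Zfn fstar g τ p ∂D = -(∫ p, Wfn fstar g τ p.1 * (g p.1 - fstar p.1) ^ 2 ∂D)) ∧
    (∫ p, (Zfn fstar g τ p) ^ 2 ∂D
      ≤ 8 * ∫ p, Wfn fstar g τ p.1 * (g p.1 - fstar p.1) ^ 2 ∂D) := by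
  have hWm : Measurable (Wfn fstar g τ) := Wfn_meas hfstar hg τ
  have hw0 : ∀ x, 0 ≤ Wfn fstar g τ x := Wfn_nonneg fstar g τ
  have hw1 : ∀ x, Wfn fstar g τ x ≤ 1 := Wfn_le_one fstar g τ
  have hZm : Measurable (Zfn fstar g τ) := by
    unfold Zfn
    exact (hWm.comp measurable_fst).mul
      ((((hfstar.comp measurable_fst).sub measurable_snd).pow_const 2).sub
        (((hg.comp measurable_fst).sub measurable_snd).pow_const 2))
  have hZb : ∀ᵐ p ∂D, |Zfn fstar g τ p| ≤ 4 := by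
    filter_upwards [hY] with p hp
    have h1 := abs_le.1 (hfb p.1)
    have h2 := abs_le.1 (hgb p.1)
    have h3 := abs_le.1 hp
    have hq0 := hw0 p.1
    have hq1 := hw1 p.1
    unfold Zfn
    rw [abs_le]
    constructor
    · nlinarith [mul_nonneg hq0 (sq_nonneg (g p.1 - p.2)),
        mul_nonneg (sub_nonneg.2 hq1) (sq_nonneg (g p.1 - p.2))]
    · nlinarith [mul_nonneg hq0 (sq_nonneg (fstar p.1 - p.2)),
        mul_nonneg (sub_nonneg.2 hq1) (sq_nonneg (fstar p.1 - p.2))]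
  set v : ℝ := ∫ p, Wfn fstar g τ p.1 * (g p.1 - fstar p.1) ^ 2 ∂D with hv_def
  have hWr2_bdd : ∀ x, |Wfn fstar g τ x * (g x - fstar x) ^ 2| ≤ 4 := by
    intro x
    have h1 := abs_le.1 (hfb x); have h2 := abs_le.1 (hgb x)
    rw [abs_le]
    constructor
    · nlinarith [mul_nonneg (hw0 x) (sq_nonneg (g x - fstar x))]
    · nlinarith [mul_nonneg (sub_nonneg.2 (hw1 x)) (sq_nonneg (g x - fstar x))]
  have hWr2_meas : Measurable fun x => Wfn fstar g τ x * (g x - fstar x) ^ 2 :=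
    hWm.mul ((hg.sub hfstar).pow_const 2)
  have hWr2_int : Integrable (fun p : X × ℝ => Wfn fstar g τ p.1 * (g p.1 - fstar p.1) ^ 2) D :=
    integrable_of_bddae D (hWr2_meas.comp measurable_fst)
      (ae_of_all _ fun p => hWr2_bdd p.1)
  have hv0 : 0 ≤ v := by
    rw [hv_def]
    exact integral_nonneg fun p => mul_nonneg (hw0 _) (sq_nonneg _)
  have hv4 : v ≤ 4 := by
    rw [hv_def]
    have h4 : ∫ p, Wfn fstar g τ p.1 * (g p.1 - fstar p.1) ^ 2 ∂D ≤ ∫ _p : X × ℝ, (4:ℝ) ∂D :=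
      integral_mono hWr2_int (integrable_const 4) (fun p => (abs_le.1 (hWr2_bdd p.1)).2)
    simpa using h4
  refine ⟨hZm, hZb, hv0, hv4, ?_, ?_⟩
  · -- mean
    set h1f : X → ℝ := fun x => Wfn fstar g τ x * (fstar x ^ 2 - g x ^ 2) with hh1
    set h2f : X → ℝ := fun x => -2 * (Wfn fstar g τ x * (fstar x - g x)) with hh2
    have hh1m : Measurable h1f := by
      rw [hh1]; exact hWm.mul ((hfstar.pow_const 2).sub (hg.pow_const 2))
    have hh2m : Measurable h2f := by
      rw [hh2]; exact (hWm.mul (hfstar.sub hg)).const_mul (-2)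
    have hh1b : ∀ x, |h1f x| ≤ 2 := by
      intro x
      have ha := abs_le.1 (hfb x); have hb := abs_le.1 (hgb x)
      simp only [hh1]
      refine mul_W_bound (hw0 x) (hw1 x) ?_
      rw [abs_le]
      constructor <;> nlinarith
    have hh2b : ∀ x, |h2f x| ≤ 4 := by
      intro x
      have ha := abs_le.1 (hfb x); have hb := abs_le.1 (hgb x)
      simp only [hh2]
      have e : -2 * (Wfn fstar g τ x * (fstar x - g x))
          = Wfn fstar g τ x * (-2 * (fstar x - g x)) := by ring
      rw [e]
      refine mul_W_bound (hw0 x) (hw1 x) ?_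
      rw [abs_le]
      constructor <;> nlinarith
    have hZeq : Zfn fstar g τ = fun p => h1f p.1 + h2f p.1 * p.2 := by
      funext p
      simp only [hh1, hh2]
      unfold Zfn
      ring
    have hi1 : Integrable (fun p : X × ℝ => h1f p.1) D :=
      integrable_of_bddae D (hh1m.comp measurable_fst) (ae_of_all _ fun p => hh1b p.1)
    have hi2 : Integrable (fun p : X × ℝ => h2f p.1 * p.2) D := by
      refine integrable_of_bddae D ((hh2m.comp measurable_fst).mul measurable_snd) (C := 4) ?_
      filter_upwards [hY] with p hp
      rw [abs_mul]
      nlinarith [hh2b p.1, abs_nonneg (h2f p.1), abs_nonneg p.2]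
    have hi3 : Integrable (fun p : X × ℝ => h2f p.1 * fstar p.1) D := by
      refine integrable_of_bddae D
        ((hh2m.comp measurable_fst).mul (hfstar.comp measurable_fst)) (C := 4) ?_
      refine ae_of_all _ fun p => ?_
      rw [abs_mul]
      nlinarith [hh2b p.1, hfb p.1, abs_nonneg (h2f p.1), abs_nonneg (fstar p.1)]
    have hsum : ∫ p, h1f p.1 ∂D + ∫ p, h2f p.1 * fstar p.1 ∂D = -v := by
      rw [← integral_add hi1 hi3, hv_def, ← integral_neg]
      refine integral_congr_ae (ae_of_all _ fun p => ?_)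
      simp only [Pi.add_apply, hh1, hh2]
      ring
    rw [hZeq, integral_add hi1 hi2, tower D fstar hB hY h2f hh2m 4 hh2b, hsum, hv_def]
  · -- second moment
    set A : X → ℝ := fun x => Wfn fstar g τ x * (fstar x - g x) ^ 2 * (fstar x + g x) ^ 2 with hA
    set B : X → ℝ := fun x => -4 * (Wfn fstar g τ x * (fstar x - g x) ^ 2 * (fstar x + g x)) with hB2
    set C : X → ℝ := fun x => 4 * (Wfn fstar g τ x * (fstar x - g x) ^ 2) with hC
    have hAm : Measurable A := by
      rw [hA]
      exact (hWm.mul ((hfstar.sub hg).pow_const 2)).mul ((hfstar.add hg).pow_const 2)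
    have hBm : Measurable B := by
      rw [hB2]
      exact ((hWm.mul ((hfstar.sub hg).pow_const 2)).mul (hfstar.add hg)).const_mul (-4)
    have hCm : Measurable C := by
      rw [hC]
      exact (hWm.mul ((hfstar.sub hg).pow_const 2)).const_mul 4
    have habs : ∀ x, Wfn fstar g τ x * (fstar x - g x) ^ 2 ≤ 4 := by
      intro x
      have ha := abs_le.1 (hfb x); have hb := abs_le.1 (hgb x)
      nlinarith [mul_nonneg (sub_nonneg.2 (hw1 x)) (sq_nonneg (fstar x - g x))]
    have habs0 : ∀ x, 0 ≤ Wfn fstar g τ x * (fstar x - g x) ^ 2 := fun x =>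
      mul_nonneg (hw0 x) (sq_nonneg _)
    have hAb : ∀ x, |A x| ≤ 16 := by
      intro x
      have ha := abs_le.1 (hfb x); have hb := abs_le.1 (hgb x)
      have hr4 : (fstar x - g x) ^ 2 ≤ 4 := by nlinarith
      have hs4 : (fstar x + g x) ^ 2 ≤ 4 := by nlinarith
      simp only [hA]
      have e : Wfn fstar g τ x * (fstar x - g x) ^ 2 * (fstar x + g x) ^ 2
          = Wfn fstar g τ x * ((fstar x - g x) ^ 2 * (fstar x + g x) ^ 2) := by ring
      rw [e]
      refine mul_W_bound (hw0 x) (hw1 x) ?_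
      rw [abs_le]
      constructor
      · nlinarith [mul_nonneg (sq_nonneg (fstar x - g x)) (sq_nonneg (fstar x + g x))]
      · nlinarith [mul_le_mul hr4 hs4 (sq_nonneg (fstar x + g x)) (by norm_num : (0:ℝ) ≤ 4)]
    have hBb : ∀ x, |B x| ≤ 32 := by
      intro x
      have ha := abs_le.1 (hfb x); have hb := abs_le.1 (hgb x)
      have hr4 : (fstar x - g x) ^ 2 ≤ 4 := by nlinarith
      simp only [hB2]
      have e : -4 * (Wfn fstar g τ x * (fstar x - g x) ^ 2 * (fstar x + g x))
          = Wfn fstar g τ x * (-4 * ((fstar x - g x) ^ 2 * (fstar x + g x))) := by ring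
      rw [e]
      refine mul_W_bound (hw0 x) (hw1 x) ?_
      rw [abs_le]
      constructor
      · nlinarith [mul_le_mul_of_nonneg_left (show fstar x + g x ≤ 2 by linarith)
          (sq_nonneg (fstar x - g x))]
      · nlinarith [mul_le_mul_of_nonneg_left (show -2 ≤ fstar x + g x by linarith)
          (sq_nonneg (fstar x - g x))]
    have hCb : ∀ x, |C x| ≤ 16 := by
      intro x
      have hx1 := habs x; have hx0 := habs0 x
      simp only [hC]
      have e : 4 * (Wfn fstar g τ x * (fstar x - g x) ^ 2)
          = Wfn fstar g τ x * (4 * (fstar x - g x) ^ 2) := by ring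
      rw [e]
      have ha := abs_le.1 (hfb x); have hb := abs_le.1 (hgb x)
      refine mul_W_bound (hw0 x) (hw1 x) ?_
      rw [abs_le]
      constructor
      · nlinarith [sq_nonneg (fstar x - g x)]
      · nlinarith
    have hiA : Integrable (fun p : X × ℝ => A p.1) D :=
      integrable_of_bddae D (hAm.comp measurable_fst) (ae_of_all _ fun p => hAb p.1)
    have hiBy : Integrable (fun p : X × ℝ => B p.1 * p.2) D := by
      refine integrable_of_bddae D ((hBm.comp measurable_fst).mul measurable_snd) (C := 32) ?_
      filter_upwards [hY] with p hp
      rw [abs_mul]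
      nlinarith [hBb p.1, abs_nonneg (B p.1), abs_nonneg p.2]
    have hiBf : Integrable (fun p : X × ℝ => B p.1 * fstar p.1) D := by
      refine integrable_of_bddae D
        ((hBm.comp measurable_fst).mul (hfstar.comp measurable_fst)) (C := 32) ?_
      refine ae_of_all _ fun p => ?_
      rw [abs_mul]
      nlinarith [hBb p.1, hfb p.1, abs_nonneg (B p.1), abs_nonneg (fstar p.1)]
    have hiC : Integrable (fun p : X × ℝ => C p.1) D :=
      integrable_of_bddae D (hCm.comp measurable_fst) (ae_of_all _ fun p => hCb p.1)
    have hiCy2 : Integrable (fun p : X × ℝ => C p.1 * p.2 ^ 2) D := by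
      refine integrable_of_bddae D
        ((hCm.comp measurable_fst).mul (measurable_snd.pow_const 2)) (C := 16) ?_
      filter_upwards [hY] with p hp
      rw [abs_mul, abs_pow]
      have h9 : |p.2| ^ 2 ≤ 1 := by nlinarith [abs_nonneg p.2]
      nlinarith [hCb p.1, abs_nonneg (C p.1), sq_nonneg |p.2|]
    have hZ2eq : (fun p : X × ℝ => (Zfn fstar g τ p) ^ 2)
        = fun p => (A p.1 + B p.1 * p.2) + C p.1 * p.2 ^ 2 := by
      funext p
      simp only [hA, hB2, hC]
      unfold Zfn
      linear_combination (((fstar p.1 - p.2) ^ 2 - (g p.1 - p.2) ^ 2) ^ 2) * Wfn_sq fstar g τ p.1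
    have hCy2le : ∫ p, C p.1 * p.2 ^ 2 ∂D ≤ ∫ p, C p.1 ∂D := by
      apply integral_mono_ae hiCy2 hiC
      filter_upwards [hY] with p hp
      have hC0 : 0 ≤ C p.1 := by
        simp only [hC]; exact mul_nonneg (by norm_num) (habs0 p.1)
      have hy2 : p.2 ^ 2 ≤ 1 := by nlinarith [abs_le.1 hp]
      nlinarith [mul_le_mul_of_nonneg_left hy2 hC0]
    have hiAB : Integrable (fun p : X × ℝ => A p.1 + B p.1 * fstar p.1) D := hiA.add hiBf
    have hiABC : Integrable (fun p : X × ℝ => A p.1 + B p.1 * fstar p.1 + C p.1) D :=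
      hiAB.add hiC
    have hiABy : Integrable (fun p : X × ℝ => A p.1 + B p.1 * p.2) D := hiA.add hiBy
    have hfinal : ∫ p, A p.1 ∂D + ∫ p, B p.1 * fstar p.1 ∂D + ∫ p, C p.1 ∂D ≤ 8 * v := by
      have e1 : ∫ p, (A p.1 + B p.1 * fstar p.1 + C p.1) ∂D
          = ∫ p, A p.1 ∂D + ∫ p, B p.1 * fstar p.1 ∂D + ∫ p, C p.1 ∂D := by
        rw [integral_add hiAB hiC, integral_add hiA hiBf]
      rw [← e1]
      have h8v : 8 * v = ∫ p : X × ℝ, 8 * (Wfn fstar g τ p.1 * (g p.1 - fstar p.1) ^ 2) ∂D := by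
        rw [hv_def, integral_const_mul]
      rw [h8v]
      apply integral_mono hiABC (hWr2_int.const_mul 8)
      intro p
      simp only [hA, hB2, hC]
      have ha := abs_le.1 (hfb p.1); have hb := abs_le.1 (hgb p.1)
      have key : (fstar p.1 + g p.1) ^ 2 - 4 * (fstar p.1 + g p.1) * fstar p.1 + 4 - 8 ≤ 0 := by
        nlinarith
      nlinarith [mul_nonpos_of_nonneg_of_nonpos (habs0 p.1) key]
    rw [hZ2eq, integral_add hiABy hiCy2, integral_add hiA hiBy,
      tower D fstar hB hY B hBm 32 hBb]
    linarith [hCy2le, hfinal]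

lemma test_transfer {X : Type} [MeasurableSpace X] (Dtrain Dtest : Measure (X × ℝ))
    [IsProbabilityMeasure Dtrain] [IsProbabilityMeasure Dtest]
    (Cinf : ℝ) (hC : 0 ≤ Cinf)
    (hRatio : Dtest.map Prod.fst ≤ ENNReal.ofReal Cinf • Dtrain.map Prod.fst)
    (q : X → ℝ) (hq : Measurable q) (hq0 : ∀ x, 0 ≤ q x) (hq4 : ∀ x, q x ≤ 4) :
    ∫ p, q p.1 ∂Dtest ≤ Cinf * ∫ p, q p.1 ∂Dtrain := by
  haveI h1 : IsProbabilityMeasure (Dtest.map Prod.fst) :=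
    Measure.isProbabilityMeasure_map measurable_fst.aemeasurable
  haveI h2 : IsProbabilityMeasure (Dtrain.map Prod.fst) :=
    Measure.isProbabilityMeasure_map measurable_fst.aemeasurable
  have e1 : ∫ p, q p.1 ∂Dtest = ∫ x, q x ∂(Dtest.map Prod.fst) :=
    (integral_map measurable_fst.aemeasurable hq.aestronglyMeasurable).symm
  have e2 : ∫ p, q p.1 ∂Dtrain = ∫ x, q x ∂(Dtrain.map Prod.fst) :=
    (integral_map measurable_fst.aemeasurable hq.aestronglyMeasurable).symm
  rw [e1, e2]
  have l1 : ∫ x, q x ∂(Dtest.map Prod.fst)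
      = (∫⁻ x, ENNReal.ofReal (q x) ∂(Dtest.map Prod.fst)).toReal :=
    integral_eq_lintegral_of_nonneg_ae (ae_of_all _ hq0) hq.aestronglyMeasurable
  have l2 : ∫ x, q x ∂(Dtrain.map Prod.fst)
      = (∫⁻ x, ENNReal.ofReal (q x) ∂(Dtrain.map Prod.fst)).toReal :=
    integral_eq_lintegral_of_nonneg_ae (ae_of_all _ hq0) hq.aestronglyMeasurable
  rw [l1, l2]
  have hfin : ∫⁻ x, ENNReal.ofReal (q x) ∂(Dtrain.map Prod.fst) ≤ 4 := by
    calc ∫⁻ x, ENNReal.ofReal (q x) ∂(Dtrain.map Prod.fst)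
        ≤ ∫⁻ x, (4 : ℝ≥0∞) ∂(Dtrain.map Prod.fst) := by
          apply lintegral_mono
          intro x
          calc ENNReal.ofReal (q x) ≤ ENNReal.ofReal 4 := ENNReal.ofReal_le_ofReal (hq4 x)
          _ = (4 : ℝ≥0∞) := by norm_num
      _ = 4 := by simp
  have hle : ∫⁻ x, ENNReal.ofReal (q x) ∂(Dtest.map Prod.fst)
      ≤ ENNReal.ofReal Cinf * ∫⁻ x, ENNReal.ofReal (q x) ∂(Dtrain.map Prod.fst) := by
    calc ∫⁻ x, ENNReal.ofReal (q x) ∂(Dtest.map Prod.fst)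
        ≤ ∫⁻ x, ENNReal.ofReal (q x) ∂(ENNReal.ofReal Cinf • Dtrain.map Prod.fst) :=
          lintegral_mono' hRatio le_rfl
      _ = ENNReal.ofReal Cinf * ∫⁻ x, ENNReal.ofReal (q x) ∂(Dtrain.map Prod.fst) :=
          lintegral_smul_measure _ _
  have hne : ENNReal.ofReal Cinf * ∫⁻ x, ENNReal.ofReal (q x) ∂(Dtrain.map Prod.fst) ≠ ⊤ := by
    apply ENNReal.mul_ne_top ENNReal.ofReal_ne_top
    exact ne_top_of_le_ne_top (by norm_num) hfin
  calc (∫⁻ x, ENNReal.ofReal (q x) ∂(Dtest.map Prod.fst)).toReal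
      ≤ (ENNReal.ofReal Cinf * ∫⁻ x, ENNReal.ofReal (q x) ∂(Dtrain.map Prod.fst)).toReal :=
        ENNReal.toReal_mono hne hle
    _ = Cinf * (∫⁻ x, ENNReal.ofReal (q x) ∂(Dtrain.map Prod.fst)).toReal := by
        rw [ENNReal.toReal_mul, ENNReal.toReal_ofReal hC]


set_option maxHeartbeats 2000000 in
/-- **Well-specified case (Corollary 3.2).**
Under covariate shift, bounded density ratio `Cinf`, boundedness, and exact realizability
(`fstar ∈ F`), with `Δ := 160 log(2|F|/δ)/(3n)` and any `0 < τ ≤ √Δ`, with probability at least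
`1 − δ` over the `n` i.i.d. training samples, the DBR estimator satisfies
`R_train(fhat) ≤ 2Δ` and `R_test(fhat) ≤ 2 Cinf Δ`. -/
theorem dbr_well_specified
    {X : Type} [MeasurableSpace X]
    (Dtrain Dtest : Measure (X × ℝ))
    [IsProbabilityMeasure Dtrain] [IsProbabilityMeasure Dtest]
    (fstar : X → ℝ) (hfstar : Measurable fstar)
    -- covariate shift: shared Bayes regression function
    (hBayesTrain : (fun p : X × ℝ => fstar p.1)
      =ᵐ[Dtrain] Dtrain[(fun p : X × ℝ => p.2) | MeasurableSpace.comap Prod.fst inferInstance])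
    (hBayesTest : (fun p : X × ℝ => fstar p.1)
      =ᵐ[Dtest] Dtest[(fun p : X × ℝ => p.2) | MeasurableSpace.comap Prod.fst inferInstance])
    -- bounded density ratio
    (Cinf : ℝ) (hCinf : 1 ≤ Cinf)
    (hRatio : Dtest.map Prod.fst ≤ ENNReal.ofReal Cinf • Dtrain.map Prod.fst)
    (F : Finset (X → ℝ)) (hFne : F.Nonempty)
    (hFmeas : ∀ f ∈ F, Measurable f)
    (hFbdd : ∀ f ∈ F, ∀ x, |f x| ≤ 1)
    (hYtrain : ∀ᵐ p ∂Dtrain, |p.2| ≤ 1)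
    (hYtest : ∀ᵐ p ∂Dtest, |p.2| ≤ 1)
    -- exact realizability (well-specified case, ε∞ = 0)
    (hreal : fstar ∈ F)
    (n : ℕ) (hn : 0 < n)
    (δ : ℝ) (hδ : δ ∈ Set.Ioo (0 : ℝ) 1)
    (τ : ℝ) (hτpos : 0 < τ)
    (hτ : τ ≤ Real.sqrt (160 * Real.log (2 * F.card / δ) / (3 * n)))
    (fhat : (Fin n → X × ℝ) → X → ℝ)
    (hDBR : ∀ ω : Fin n → X × ℝ, IsDBR τ F hFne ω (fhat ω)) :
    ENNReal.ofReal (1 - δ) ≤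
      (Measure.pi fun _ : Fin n => Dtrain)
        {ω | ∫ p, (fhat ω p.1 - fstar p.1) ^ 2 ∂Dtrain
               ≤ 2 * (160 * Real.log (2 * F.card / δ) / (3 * n)) ∧
             ∫ p, (fhat ω p.1 - fstar p.1) ^ 2 ∂Dtest
               ≤ 2 * Cinf * (160 * Real.log (2 * F.card / δ) / (3 * n))} := by
  obtain ⟨hδ0, hδ1⟩ := hδ
  have hnR : (0:ℝ) < n := by exact_mod_cast hn
  have hcard1 : 1 ≤ (F.card : ℝ) := by exact_mod_cast Finset.card_pos.2 hFne
  have harg0 : (0:ℝ) < 2 * F.card / δ := by positivity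
  have hL : 0 < Real.log (2 * F.card / δ) := by
    apply Real.log_pos
    rw [lt_div_iff₀ hδ0]
    nlinarith
  set L : ℝ := Real.log (2 * F.card / δ) with hLdef
  set Δ : ℝ := 160 * L / (3 * n) with hΔdef
  have hΔ0 : 0 < Δ := by rw [hΔdef]; positivity
  have hτ2 : τ ^ 2 ≤ Δ := by
    calc τ ^ 2 ≤ Real.sqrt Δ ^ 2 := by
          apply pow_le_pow_left₀ hτpos.le
          rw [hΔdef]
          exact hτ
    _ = Δ := Real.sq_sqrt hΔ0.le
  have hfsb : ∀ x, |fstar x| ≤ 1 := hFbdd fstar hreal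
  -- value function
  set vv : (X → ℝ) → ℝ :=
    fun g => ∫ p, Wfn fstar g τ p.1 * (g p.1 - fstar p.1) ^ 2 ∂Dtrain with hvv
  have hfacts : ∀ g ∈ F, Measurable (Zfn fstar g τ) ∧
      (∀ᵐ p ∂Dtrain, |Zfn fstar g τ p| ≤ 4) ∧ (0 ≤ vv g) ∧ (vv g ≤ 4) ∧
      (∫ p, Zfn fstar g τ p ∂Dtrain = -(vv g)) ∧
      (∫ p, (Zfn fstar g τ p) ^ 2 ∂Dtrain ≤ 8 * vv g) := by
    intro g hg
    exact moment_facts Dtrain fstar hfstar hfsb hBayesTrain hYtrain g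
      (hFmeas g hg) (hFbdd g hg) τ
  set P := Measure.pi fun _ : Fin n => Dtrain with hP
  haveI : IsProbabilityMeasure P := by rw [hP]; infer_instance
  -- bad events
  set Bad : (X → ℝ) → Set (Fin n → X × ℝ) := fun g =>
    {ω | -(vv g) + (Real.sqrt (16 * vv g * L / n) + 16 * L / (3 * n))
      ≤ (1 / n : ℝ) * ∑ i, Zfn fstar g τ (ω i)} with hBad
  have hBadMeas : ∀ g ∈ F, MeasurableSet (Bad g) := by
    intro g hg
    rw [hBad]
    apply measurableSet_le measurable_const
    apply Measurable.const_mul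
    exact Finset.measurable_sum Finset.univ
      (fun i _ => (hfacts g hg).1.comp (measurable_pi_apply i))
  have hBadP : ∀ g ∈ F, P (Bad g) ≤ ENNReal.ofReal (Real.exp (-L)) := by
    intro g hg
    obtain ⟨hZm, hZb, hv0, hv4, hmean, hsq⟩ := hfacts g hg
    exact bernstein_pi Dtrain (Zfn fstar g τ) hZm hZb (vv g) hv0 hv4 hmean hsq L hL n hn
  have hexp : Real.exp (-L) = δ / (2 * F.card) := by
    rw [hLdef, ← Real.log_inv, Real.exp_log (by positivity), inv_div]
  have hBadU : P (⋃ g ∈ F, Bad g) ≤ ENNReal.ofReal δ := by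
    calc P (⋃ g ∈ F, Bad g) ≤ ∑ g ∈ F, P (Bad g) := measure_biUnion_finset_le F Bad
    _ ≤ ∑ _g ∈ F, ENNReal.ofReal (δ / (2 * F.card)) := by
        apply Finset.sum_le_sum
        intro g hg
        rw [← hexp]
        exact hBadP g hg
    _ = F.card * ENNReal.ofReal (δ / (2 * F.card)) := by
        rw [Finset.sum_const, nsmul_eq_mul]
    _ = ENNReal.ofReal (F.card * (δ / (2 * F.card))) := by
        rw [ENNReal.ofReal_mul (by positivity)]
        norm_num
    _ ≤ ENNReal.ofReal δ := by
        apply ENNReal.ofReal_le_ofReal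
        rw [mul_div_assoc']
        rw [div_le_iff₀ (by positivity)]
        nlinarith
  have hBadUMeas : MeasurableSet (⋃ g ∈ F, Bad g) :=
    F.measurableSet_biUnion hBadMeas
  -- good ⊆ event
  have hsubset : (⋃ g ∈ F, Bad g)ᶜ ⊆
      {ω | ∫ p, (fhat ω p.1 - fstar p.1) ^ 2 ∂Dtrain ≤ 2 * Δ ∧
           ∫ p, (fhat ω p.1 - fstar p.1) ^ 2 ∂Dtest ≤ 2 * Cinf * Δ} := by
    intro ω hω
    simp only [Set.mem_compl_iff, Set.mem_iUnion, not_exists] at hω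
    have hGood : ∀ g ∈ F, (1 / n : ℝ) * ∑ i, Zfn fstar g τ (ω i)
        < -(vv g) + (Real.sqrt (16 * vv g * L / n) + 16 * L / (3 * n)) := by
      intro g hg
      by_contra hcon
      exact hω g hg (not_lt.1 hcon)
    -- sqrt AM-GM
    have hsqrt : ∀ g ∈ F, Real.sqrt (16 * vv g * L / n) ≤ vv g / 2 + 8 * L / n := by
      intro g hg
      have hv0 := (hfacts g hg).2.2.1
      rw [Real.sqrt_le_iff]
      refine ⟨by positivity, ?_⟩
      have key : (vv g / 2 + 8 * L / ↑n) ^ 2 - 16 * vv g * L / ↑n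
          = (vv g * ↑n - 16 * L) ^ 2 / (4 * (↑n:ℝ) ^ 2) := by
        field_simp
        ring
      have hnn : (0:ℝ) ≤ (vv g * ↑n - 16 * L) ^ 2 / (4 * (↑n:ℝ) ^ 2) :=
        div_nonneg (sq_nonneg _) (by positivity)
      linarith
    have hthr : ∀ g ∈ F, -(vv g) + (Real.sqrt (16 * vv g * L / n) + 16 * L / (3 * n))
        ≤ -(vv g) / 2 + 40 * L / (3 * n) := by
      intro g hg
      have h5 := hsqrt g hg
      have e2 : (16:ℝ) * L / (3 * ↑n) = 16 / 3 * (L / ↑n) := by ring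
      have e3 : (40:ℝ) * L / (3 * ↑n) = 40 / 3 * (L / ↑n) := by ring
      have e4 : (8:ℝ) * L / ↑n = 8 * (L / ↑n) := by ring
      linarith
    -- empObj identities
    have hemp1 : ∀ g : X → ℝ, empObj τ fstar g ω = (1 / n : ℝ) * ∑ i, Zfn fstar g τ (ω i) :=
      fun g => rfl
    have hemp2 : ∀ f : X → ℝ, empObj τ f fstar ω
        = -((1 / n : ℝ) * ∑ i, Zfn fstar f τ (ω i)) := by
      intro f
      have hterm : ∀ i : Fin n, disagreementFilter τ f fstar (ω i).1 *
          ((f (ω i).1 - (ω i).2) ^ 2 - (fstar (ω i).1 - (ω i).2) ^ 2)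
          = -(Zfn fstar f τ (ω i)) := by
        intro i
        unfold Zfn Wfn disagreementFilter
        rw [abs_sub_comm]
        ring
      calc empObj τ f fstar ω = (1 / n : ℝ) * ∑ i, -(Zfn fstar f τ (ω i)) := by
            unfold empObj
            exact congrArg _ (Finset.sum_congr rfl fun i _ => hterm i)
      _ = -((1 / n : ℝ) * ∑ i, Zfn fstar f τ (ω i)) := by
            rw [Finset.sum_neg_distrib, mul_neg]
    have key1 : ∀ g ∈ F, empObj τ fstar g ω ≤ 40 * L / (3 * n) := by
      intro g hg
      have hv0 := (hfacts g hg).2.2.1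
      have h1 := (hGood g hg).le
      have h2 := hthr g hg
      rw [hemp1 g]
      linarith
    have hfF : fhat ω ∈ F := (hDBR ω).1
    have hchain : empObj τ (fhat ω) fstar ω ≤ 40 * L / (3 * n) :=
      le_trans (Finset.le_sup' (fun g => empObj τ (fhat ω) g ω) hreal)
        (le_trans ((hDBR ω).2 fstar hreal) (Finset.sup'_le hFne _ key1))
    have key2 : vv (fhat ω) / 2 - 40 * L / (3 * n) ≤ empObj τ (fhat ω) fstar ω := by
      have h1 := hGood (fhat ω) hfF
      have h2 := hthr (fhat ω) hfF
      rw [hemp2 (fhat ω)]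
      linarith
    have hvf : vv (fhat ω) ≤ Δ := by
      have e : Δ = 160 * L / (3 * n) := hΔdef
      have e2 : (160:ℝ) * L / (3 * n) = 4 * (40 * L / (3 * n)) := by ring
      rw [e, e2]
      linarith [key2.trans hchain]
    -- R_train bound
    have hfm : Measurable (fhat ω) := hFmeas _ hfF
    have hfb : ∀ x, |fhat ω x| ≤ 1 := hFbdd _ hfF
    have hq0 : ∀ x, 0 ≤ (fhat ω x - fstar x) ^ 2 := fun x => sq_nonneg _
    have hq4 : ∀ x, (fhat ω x - fstar x) ^ 2 ≤ 4 := by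
      intro x
      have h1 := abs_le.1 (hfb x); have h2 := abs_le.1 (hfsb x)
      nlinarith
    have hqm : Measurable (fun x => (fhat ω x - fstar x) ^ 2) := (hfm.sub hfstar).pow_const 2
    have hiq : Integrable (fun p : X × ℝ => (fhat ω p.1 - fstar p.1) ^ 2) Dtrain := by
      refine integrable_of_bddae Dtrain (hqm.comp measurable_fst) (C := 4) ?_
      exact ae_of_all _ fun p => by rw [abs_of_nonneg (hq0 p.1)]; exact hq4 p.1
    have hiW : Integrable
        (fun p : X × ℝ => Wfn fstar (fhat ω) τ p.1 * (fhat ω p.1 - fstar p.1) ^ 2) Dtrain := by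
      refine integrable_of_bddae Dtrain
        (((Wfn_meas hfstar hfm τ).mul hqm).comp measurable_fst) (C := 4) ?_
      refine ae_of_all _ fun p => ?_
      rw [abs_of_nonneg (mul_nonneg (Wfn_nonneg _ _ _ _) (hq0 p.1))]
      calc Wfn fstar (fhat ω) τ p.1 * (fhat ω p.1 - fstar p.1) ^ 2
          ≤ 1 * 4 := mul_le_mul (Wfn_le_one _ _ _ _) (hq4 p.1) (hq0 p.1) zero_le_one
      _ = 4 := one_mul 4
    have hiWt : Integrable
        (fun p : X × ℝ => Wfn fstar (fhat ω) τ p.1 * (fhat ω p.1 - fstar p.1) ^ 2 + τ ^ 2)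
        Dtrain := hiW.add (integrable_const _)
    have hRtrain : ∫ p, (fhat ω p.1 - fstar p.1) ^ 2 ∂Dtrain ≤ 2 * Δ := by
      have hpt : ∀ p : X × ℝ, (fhat ω p.1 - fstar p.1) ^ 2
          ≤ Wfn fstar (fhat ω) τ p.1 * (fhat ω p.1 - fstar p.1) ^ 2 + τ ^ 2 := by
        intro p
        unfold Wfn
        split
        next h =>
          nlinarith [sq_nonneg τ]
        next h =>
          push_neg at h
          have e : (fhat ω p.1 - fstar p.1) ^ 2 = |fstar p.1 - fhat ω p.1| ^ 2 := by
            rw [sq_abs]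
            ring
          rw [e]
          have := pow_le_pow_left₀ (abs_nonneg _) h.le 2
          nlinarith [this]
      calc ∫ p, (fhat ω p.1 - fstar p.1) ^ 2 ∂Dtrain
          ≤ ∫ p, (Wfn fstar (fhat ω) τ p.1 * (fhat ω p.1 - fstar p.1) ^ 2 + τ ^ 2) ∂Dtrain :=
            integral_mono hiq hiWt hpt
        _ = vv (fhat ω) + τ ^ 2 := by
            rw [integral_add hiW (integrable_const _), integral_const]
            simp [hvv]
        _ ≤ Δ + Δ := add_le_add hvf hτ2
        _ = 2 * Δ := by ring
    have hRtest : ∫ p, (fhat ω p.1 - fstar p.1) ^ 2 ∂Dtest ≤ 2 * Cinf * Δ := by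
      have := test_transfer Dtrain Dtest Cinf (by linarith) hRatio
        (fun x => (fhat ω x - fstar x) ^ 2) hqm hq0 hq4
      calc ∫ p, (fhat ω p.1 - fstar p.1) ^ 2 ∂Dtest
          ≤ Cinf * ∫ p, (fhat ω p.1 - fstar p.1) ^ 2 ∂Dtrain := this
        _ ≤ Cinf * (2 * Δ) := mul_le_mul_of_nonneg_left hRtrain (by linarith)
        _ = 2 * Cinf * Δ := by ring
    exact ⟨hRtrain, hRtest⟩
  calc ENNReal.ofReal (1 - δ) = 1 - ENNReal.ofReal δ := by
        rw [ENNReal.ofReal_sub _ hδ0.le, ENNReal.ofReal_one]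
  _ ≤ 1 - P (⋃ g ∈ F, Bad g) := tsub_le_tsub_left hBadU 1
  _ = P (⋃ g ∈ F, Bad g)ᶜ := (prob_compl_eq_one_sub hBadUMeas).symm
  _ ≤ _ := measure_mono hsubset

end
end

section
/- (Non-negativity, Lemma 4) Let τ ≥ 2 ε∞ and let f̄ ∈ F satisfy ‖f̄ − f*‖∞ ≤ ε∞. Then for every f ∈ F, the population objective satisfies L(f; f̄) ≥ (τ² − 2τε∞) · P_train[ W^τ_{f,f̄}(x) = 1 ] ≥ 0. -/
open MeasureTheory Real

noncomputable section

/-- The population disagreement-based objective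
`L(f;g) = E_train[W^τ_{f,g}(x) ((f(x) − y)² − (g(x) − y)²)]`. -/
def popObj {X : Type} [MeasurableSpace X] (D : Measure (X × ℝ)) (τ : ℝ) (f g : X → ℝ) : ℝ :=
  ∫ p, disagreementFilter τ f g p.1 * ((f p.1 - p.2) ^ 2 - (g p.1 - p.2) ^ 2) ∂D

/-- **Non-negativity (Lemma 4).**
If `τ ≥ 2ε` and `fbar ∈ F` satisfies `‖fbar − fstar‖∞ ≤ ε`, then for every `f ∈ F`,
`L(f; fbar) ≥ (τ² − 2τε) · P_train[W^τ_{f,fbar}(x) = 1] ≥ 0`. -/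
theorem dbr_nonnegativity
    {X : Type} [MeasurableSpace X]
    (Dtrain : Measure (X × ℝ)) [IsProbabilityMeasure Dtrain]
    (fstar : X → ℝ) (hfstar : Measurable fstar)
    -- `fstar` is the Bayes regression function of `Dtrain`
    (hBayes : (fun p : X × ℝ => fstar p.1)
      =ᵐ[Dtrain] Dtrain[(fun p : X × ℝ => p.2) | MeasurableSpace.comap Prod.fst inferInstance])
    (F : Set (X → ℝ))
    (hFmeas : ∀ f ∈ F, Measurable f)
    (hFbdd : ∀ f ∈ F, ∀ x, |f x| ≤ 1)
    (hY : ∀ᵐ p ∂Dtrain, |p.2| ≤ 1)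
    (ε τ : ℝ) (hε : 0 ≤ ε) (hτ : 2 * ε ≤ τ)
    (fbar : X → ℝ) (hfbarF : fbar ∈ F)
    (hfbar : ∀ x, |fbar x - fstar x| ≤ ε) :
    ∀ f ∈ F,
      (τ ^ 2 - 2 * τ * ε) *
          ((Dtrain.map Prod.fst) {x | τ ≤ |f x - fbar x|}).toReal
        ≤ popObj Dtrain τ f fbar ∧
      0 ≤ (τ ^ 2 - 2 * τ * ε) *
          ((Dtrain.map Prod.fst) {x | τ ≤ |f x - fbar x|}).toReal := by
  intro f hfF
  have hfm := hFmeas f hfF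
  have hfbm := hFmeas fbar hfbarF
  have hfb := hFbdd f hfF
  have hfbb := hFbdd fbar hfbarF
  have hnn : 0 ≤ τ ^ 2 - 2 * τ * ε := by nlinarith
  have hfsb : ∀ x, |fstar x| ≤ 1 + ε := by
    intro x
    have h1 := hfbar x
    have h2 := hfbb x
    rw [abs_le] at *
    constructor <;> nlinarith [h1.1, h1.2, h2.1, h2.2]
  have hm : MeasurableSpace.comap (Prod.fst : X × ℝ → X) inferInstance
      ≤ (inferInstance : MeasurableSpace (X × ℝ)) := measurable_fst.comap_le
  set W : X → ℝ := disagreementFilter τ f fbar with hW_def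
  have hSmeas : MeasurableSet {x : X | τ ≤ |f x - fbar x|} :=
    measurableSet_le measurable_const (hfm.sub hfbm).abs
  have hWmeas : Measurable W := by
    simp only [hW_def, disagreementFilter]
    exact Measurable.ite hSmeas measurable_const measurable_const
  have hW01 : ∀ x, 0 ≤ W x ∧ W x ≤ 1 := by
    intro x
    simp only [hW_def, disagreementFilter]
    split <;> norm_num
  set B : X → ℝ := fun x => 2 * W x * (f x - fbar x) with hB_def
  have hBmeas : Measurable B := ((measurable_const.mul hWmeas).mul (hfm.sub hfbm))
  have hBbdd : ∀ x, |B x| ≤ 4 := by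
    intro x
    have h1 := hW01 x
    have h2 := hfb x
    have h3 := hfbb x
    simp only [hB_def]
    rw [abs_le] at *
    constructor <;> nlinarith [h1.1, h1.2]
  have hfst_m : Measurable[MeasurableSpace.comap (Prod.fst : X × ℝ → X) inferInstance]
      (Prod.fst : X × ℝ → X) := Measurable.of_comap_le le_rfl
  have hgm : StronglyMeasurable[MeasurableSpace.comap (Prod.fst : X × ℝ → X) inferInstance]
      (fun p : X × ℝ => B p.1) :=
    (hBmeas.comp hfst_m).stronglyMeasurable
  have hY2 : Integrable (fun p : X × ℝ => p.2) Dtrain := by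
    refine (integrable_const (1 : ℝ)).mono' measurable_snd.aestronglyMeasurable ?_
    filter_upwards [hY] with p hp using by simpa using hp
  have hgY : Integrable ((fun p : X × ℝ => B p.1) * fun p : X × ℝ => p.2) Dtrain := by
    refine (integrable_const (4 : ℝ)).mono'
      ((hBmeas.comp measurable_fst).mul measurable_snd).aestronglyMeasurable ?_
    filter_upwards [hY] with p hp
    simp only [Pi.mul_apply, norm_mul, Real.norm_eq_abs]
    calc |B p.1| * |p.2| ≤ 4 * 1 :=
          mul_le_mul (hBbdd _) hp (abs_nonneg _) (by norm_num)
      _ = 4 := by norm_num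
  have hgY' : Integrable (fun p : X × ℝ => B p.1 * p.2) Dtrain := hgY
  -- key conditional-expectation step
  have key : ∫ p, B p.1 * p.2 ∂Dtrain = ∫ p, B p.1 * fstar p.1 ∂Dtrain := by
    have h1 := condExp_mul_of_stronglyMeasurable_left (μ := Dtrain) hgm hgY hY2
    calc ∫ p, B p.1 * p.2 ∂Dtrain
        = ∫ p, ((fun p : X × ℝ => B p.1) * fun p : X × ℝ => p.2) p ∂Dtrain := rfl
      _ = ∫ p, (Dtrain[(fun p : X × ℝ => B p.1) * fun p : X × ℝ =>
            p.2|MeasurableSpace.comap Prod.fst inferInstance]) p ∂Dtrain :=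
          (integral_condExp hm).symm
      _ = ∫ p, ((fun p : X × ℝ => B p.1) * Dtrain[fun p : X × ℝ =>
            p.2|MeasurableSpace.comap Prod.fst inferInstance]) p ∂Dtrain :=
          integral_congr_ae h1
      _ = ∫ p, B p.1 * fstar p.1 ∂Dtrain := by
          refine integral_congr_ae ?_
          filter_upwards [hBayes] with p hp
          simp only [Pi.mul_apply, ← hp]
  -- pointwise lower bound
  have hpt : ∀ x : X, (τ ^ 2 - 2 * τ * ε) * W x ≤
      W x * ((f x) ^ 2 - (fbar x) ^ 2) - B x * fstar x := by
    intro x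
    have he := hfbar x
    rw [abs_le] at he
    simp only [hB_def, hW_def, disagreementFilter]
    split
    · rename_i h
      rcases abs_cases (f x - fbar x) with ⟨heq, _⟩ | ⟨heq, _⟩ <;> rw [heq] at h <;>
        nlinarith [he.1, he.2, sq_nonneg (f x - fbar x)]
    · simp
  -- integrability of the two sides
  have hIW : Integrable (fun p : X × ℝ => (τ ^ 2 - 2 * τ * ε) * W p.1) Dtrain := by
    refine (integrable_const (τ ^ 2 - 2 * τ * ε)).mono'
      (measurable_const.mul (hWmeas.comp measurable_fst)).aestronglyMeasurable ?_
    refine Filter.Eventually.of_forall fun p => ?_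
    have h1 := hW01 p.1
    simp only [norm_mul, Real.norm_eq_abs]
    calc |τ ^ 2 - 2 * τ * ε| * |W p.1| ≤ |τ ^ 2 - 2 * τ * ε| * 1 := by
          gcongr
          rw [abs_le]; exact ⟨by linarith [h1.1], h1.2⟩
      _ = τ ^ 2 - 2 * τ * ε := by rw [mul_one, abs_of_nonneg hnn]
  have hA : Integrable (fun p : X × ℝ => W p.1 * ((f p.1) ^ 2 - (fbar p.1) ^ 2)) Dtrain := by
    refine (integrable_const (2 : ℝ)).mono'
      ((hWmeas.comp measurable_fst).mul
        (((hfm.comp measurable_fst).pow_const 2).sub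
          ((hfbm.comp measurable_fst).pow_const 2))).aestronglyMeasurable ?_
    refine Filter.Eventually.of_forall fun p => ?_
    have h1 := hW01 p.1
    have h2 := hfb p.1
    have h3 := hfbb p.1
    rw [abs_le] at h2 h3
    simp only [norm_mul, Real.norm_eq_abs]
    have hb : |(f p.1) ^ 2 - (fbar p.1) ^ 2| ≤ 2 := by
      rw [abs_le]; constructor <;> nlinarith [h2.1, h2.2, h3.1, h3.2]
    calc |W p.1| * |(f p.1) ^ 2 - (fbar p.1) ^ 2| ≤ 1 * 2 :=
          mul_le_mul (abs_le.2 ⟨by linarith [h1.1], h1.2⟩) hb (abs_nonneg _) (by norm_num)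
      _ = 2 := by norm_num
  have hBf : Integrable (fun p : X × ℝ => B p.1 * fstar p.1) Dtrain := by
    refine (integrable_const (4 * (1 + ε))).mono'
      ((hBmeas.comp measurable_fst).mul (hfstar.comp measurable_fst)).aestronglyMeasurable ?_
    refine Filter.Eventually.of_forall fun p => ?_
    simp only [norm_mul, Real.norm_eq_abs]
    exact mul_le_mul (hBbdd _) (hfsb _) (abs_nonneg _) (by norm_num)
  -- rewrite popObj
  have hpop : popObj Dtrain τ f fbar
      = ∫ p, (W p.1 * ((f p.1) ^ 2 - (fbar p.1) ^ 2) - B p.1 * fstar p.1) ∂Dtrain := by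
    have expand : popObj Dtrain τ f fbar
        = ∫ p, (W p.1 * ((f p.1) ^ 2 - (fbar p.1) ^ 2) - B p.1 * p.2) ∂Dtrain := by
      unfold popObj
      refine integral_congr_ae (Filter.Eventually.of_forall fun p => ?_)
      simp only [hB_def, hW_def]
      ring
    rw [expand, integral_sub hA hgY', integral_sub hA hBf, key]
  -- integral of W equals measure of the set
  have hWint : ∫ p, W p.1 ∂Dtrain
      = ((Dtrain.map Prod.fst) {x | τ ≤ |f x - fbar x|}).toReal := by
    rw [Measure.map_apply measurable_fst hSmeas]
    have hind : (fun p : X × ℝ => W p.1)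
        = (Prod.fst ⁻¹' {x : X | τ ≤ |f x - fbar x|}).indicator 1 := by
      funext p
      by_cases h : τ ≤ |f p.1 - fbar p.1| <;>
        simp [hW_def, disagreementFilter, Set.indicator_apply, h]
    rw [hind, integral_indicator_one (measurable_fst hSmeas)]
    rfl
  constructor
  · rw [hpop]
    calc (τ ^ 2 - 2 * τ * ε) * ((Dtrain.map Prod.fst) {x | τ ≤ |f x - fbar x|}).toReal
        = ∫ p, (τ ^ 2 - 2 * τ * ε) * W p.1 ∂Dtrain := by
          rw [integral_const_mul, hWint]
      _ ≤ _ := integral_mono hIW (hA.sub hBf) fun p => hpt p.1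
  · exact mul_nonneg hnn ENNReal.toReal_nonneg
end
end

section
/- (Variance bound for the excess square loss) Let D_train be a probability distribution over X × ℝ with |y| ≤ 1 almost surely and Bayes regression function f* := E_train[y | x]. Let f, f̄ : X → ℝ be measurable with ‖f‖∞ ≤ 1, ‖f̄‖∞ ≤ 1, and ‖f̄ − f*‖∞ ≤ ε∞. Then Var[ (f(x) − y)² − (f̄(x) − y)² ] ≤ 8 E[ (f(x) − y)² − (f̄(x) − y)² ] + 16 ε∞². -/
open MeasureTheory Real ProbabilityTheory

private lemma int_bdd {α : Type*} [MeasurableSpace α] {μ : Measure α} [IsProbabilityMeasure μ]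
    {g : α → ℝ} {C : ℝ} (hg : AEStronglyMeasurable g μ) (h : ∀ᵐ a ∂μ, |g a| ≤ C) :
    Integrable g μ :=
  (integrable_const C).mono' hg (by simpa [Real.norm_eq_abs] using h)

private abbrev mfst (X : Type) [MeasurableSpace X] : MeasurableSpace (X × ℝ) :=
  MeasurableSpace.comap Prod.fst inferInstance

private lemma ptwise (a b c y ε : ℝ) (ha : |a| ≤ 1) (hb : |b| ≤ 1) (hy : |y| ≤ 1)
    (hbc : |b - c| ≤ ε) :
    (a-b)^2*((a+b)^2+4*y^2) - 4*((a-b)^2*(a+b))*c ≤ 8*(a-c)^2 + 8*ε^2 := by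
  obtain ⟨ha1, ha2⟩ := abs_le.mp ha
  obtain ⟨hb1, hb2⟩ := abs_le.mp hb
  obtain ⟨hy1, hy2⟩ := abs_le.mp hy
  obtain ⟨h1, h2⟩ := abs_le.mp hbc
  nlinarith [mul_nonneg (sq_nonneg (a+b-2*c)) (show (0:ℝ) ≤ 4 - (a-b)^2 by nlinarith),
    mul_nonneg (sq_nonneg (a-b)) (show (0:ℝ) ≤ 1 - y^2 by nlinarith),
    sq_le_sq' h1 h2, mul_nonneg (sq_nonneg (a-b)) (sq_nonneg c)]

/-- **Variance bound for the excess square loss.**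
Let `D_train` be a probability distribution over `X × ℝ` with `|y| ≤ 1` almost surely and Bayes
regression function `fstar`. Let `f, fbar : X → ℝ` be measurable with `‖f‖∞ ≤ 1`, `‖fbar‖∞ ≤ 1`,
and `‖fbar − fstar‖∞ ≤ ε`. Then
`Var[(f(x) − y)² − (fbar(x) − y)²] ≤ 8 E[(f(x) − y)² − (fbar(x) − y)²] + 16 ε²`. -/
theorem excess_loss_variance_bound
    {X : Type} [MeasurableSpace X]
    (Dtrain : Measure (X × ℝ)) [IsProbabilityMeasure Dtrain]
    (fstar : X → ℝ) (hfstar : Measurable fstar)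
    -- `fstar` is the Bayes regression function of `Dtrain`
    (hBayes : (fun p : X × ℝ => fstar p.1)
      =ᵐ[Dtrain] Dtrain[(fun p : X × ℝ => p.2) | MeasurableSpace.comap Prod.fst inferInstance])
    (hY : ∀ᵐ p ∂Dtrain, |p.2| ≤ 1)
    (f fbar : X → ℝ) (hf : Measurable f) (hfbar : Measurable fbar)
    (hfb : ∀ x, |f x| ≤ 1) (hfbarb : ∀ x, |fbar x| ≤ 1)
    (ε : ℝ) (hε : 0 ≤ ε)
    (hmis : ∀ x, |fbar x - fstar x| ≤ ε) :
    variance (fun p : X × ℝ => (f p.1 - p.2) ^ 2 - (fbar p.1 - p.2) ^ 2) Dtrain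
      ≤ 8 * ∫ p, ((f p.1 - p.2) ^ 2 - (fbar p.1 - p.2) ^ 2) ∂Dtrain + 16 * ε ^ 2 := by
  set μ := Dtrain with hμ
  have hm : mfst X ≤ (Prod.instMeasurableSpace : MeasurableSpace (X × ℝ)) :=
    measurable_fst.comap_le
  haveI : SigmaFinite (μ.trim hm) := inferInstance
  -- bound on fstar
  have hfstarb : ∀ x, |fstar x| ≤ 1 + ε := by
    intro x
    have h1 := hmis x
    have h2 := hfbarb x
    calc |fstar x| = |fbar x - (fbar x - fstar x)| := by ring_nf
    _ ≤ |fbar x| + |fbar x - fstar x| := abs_sub _ _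
    _ ≤ 1 + ε := add_le_add h2 h1
  -- measurability helpers
  have hfstm : Measurable[mfst X] (Prod.fst : X × ℝ → X) := Measurable.of_comap_le le_rfl
  have hYint : Integrable (fun p : X × ℝ => p.2) μ :=
    int_bdd measurable_snd.aestronglyMeasurable hY
  -- key substitution: replace `y` by `fstar x` against an `x`-measurable bounded weight
  have key : ∀ (g : X → ℝ), Measurable g → ∀ (C : ℝ), (∀ x, |g x| ≤ C) →
      ∫ p, g p.1 * p.2 ∂μ = ∫ p, g p.1 * fstar p.1 ∂μ := by
    intro g hg C hgb
    have hgm : Measurable[mfst X] (fun p : X × ℝ => g p.1) := hg.comp hfstm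
    have hgsm : StronglyMeasurable[mfst X] (fun p : X × ℝ => g p.1) := hgm.stronglyMeasurable
    have hgmeas : Measurable (fun p : X × ℝ => g p.1) := hg.comp measurable_fst
    have hgint : Integrable ((fun p : X × ℝ => g p.1) * fun p : X × ℝ => p.2) μ := by
      apply int_bdd (C := |C| * 1) (hgmeas.mul measurable_snd).aestronglyMeasurable
      filter_upwards [hY] with p hp
      simp only [Pi.mul_apply, abs_mul]
      exact mul_le_mul ((hgb p.1).trans (le_abs_self C)) hp (abs_nonneg _) (abs_nonneg _)
    have h1 := condExp_mul_of_stronglyMeasurable_left (μ := μ) hgsm hgint hYint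
    have h2 : ((fun p : X × ℝ => g p.1) * μ[(fun p : X × ℝ => p.2)|mfst X])
        =ᵐ[μ] fun p : X × ℝ => g p.1 * fstar p.1 := by
      filter_upwards [hBayes] with p hp
      simp only [Pi.mul_apply, ← hp]
    calc ∫ p, g p.1 * p.2 ∂μ
        = ∫ p, ((fun p : X × ℝ => g p.1) * fun p : X × ℝ => p.2) p ∂μ := rfl
      _ = ∫ p, (μ[(fun p : X × ℝ => g p.1) * fun p : X × ℝ => p.2|mfst X]) p ∂μ :=
          (integral_condExp hm).symm
      _ = ∫ p, g p.1 * fstar p.1 ∂μ := integral_congr_ae (h1.trans h2)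
  -- names for the relevant functions
  set Z : X × ℝ → ℝ := fun p => (f p.1 - p.2) ^ 2 - (fbar p.1 - p.2) ^ 2 with hZ
  have hZmeas : Measurable Z :=
    (((hf.comp measurable_fst).sub measurable_snd).pow_const 2).sub
      (((hfbar.comp measurable_fst).sub measurable_snd).pow_const 2)
  have hZbd : ∀ᵐ p ∂μ, |Z p| ≤ 8 := by
    filter_upwards [hY] with p hp
    have h1 := abs_le.mp (hfb p.1); have h2 := abs_le.mp (hfbarb p.1)
    have hp' := abs_le.mp hp
    simp only [hZ, abs_le]
    constructor <;> nlinarith [hp'.1, hp'.2, h1.1, h1.2, h2.1, h2.2]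
  have hZint : Integrable Z μ := int_bdd hZmeas.aestronglyMeasurable hZbd
  -- integrability of the various bounded integrands
  have intu : Integrable (fun p : X × ℝ => (f p.1 - fstar p.1) ^ 2) μ := by
    apply int_bdd (C := (2 + ε) ^ 2)
      (((hf.comp measurable_fst).sub (hfstar.comp measurable_fst)).pow_const 2).aestronglyMeasurable
    filter_upwards with p
    simp only [Pi.sub_apply, Pi.add_apply, Pi.mul_apply, Pi.pow_apply, Function.comp_apply, abs_le]
    have h1 := abs_le.mp (hfb p.1); have h2 := abs_le.mp (hfstarb p.1)
    constructor <;> nlinarith [h1.1, h1.2, h2.1, h2.2]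
  have intv : Integrable (fun p : X × ℝ => (fbar p.1 - fstar p.1) ^ 2) μ := by
    apply int_bdd (C := ε ^ 2)
      (((hfbar.comp measurable_fst).sub
        (hfstar.comp measurable_fst)).pow_const 2).aestronglyMeasurable
    filter_upwards with p
    simp only [Pi.sub_apply, Pi.add_apply, Pi.mul_apply, Pi.pow_apply, Function.comp_apply]
    have := sq_le_sq' (abs_le.mp (hmis p.1)).1 (abs_le.mp (hmis p.1)).2
    rwa [abs_of_nonneg (sq_nonneg _)]
  -- Step 1 : ∫ Z = ∫ (f-f*)² - ∫ (fbar-f*)²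
  have step1 : ∫ p, Z p ∂μ
      = ∫ p, (f p.1 - fstar p.1) ^ 2 ∂μ - ∫ p, (fbar p.1 - fstar p.1) ^ 2 ∂μ := by
    have inta : Integrable (fun p : X × ℝ => f p.1 ^ 2 - fbar p.1 ^ 2) μ := by
      apply int_bdd (C := 2)
        (((hf.comp measurable_fst).pow_const 2).sub
          ((hfbar.comp measurable_fst).pow_const 2)).aestronglyMeasurable
      filter_upwards with p
      simp only [Pi.sub_apply, Pi.add_apply, Pi.mul_apply, Pi.pow_apply, Function.comp_apply, abs_le]
      have h1 := abs_le.mp (hfb p.1); have h2 := abs_le.mp (hfbarb p.1)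
      constructor <;> nlinarith [h1.1, h1.2, h2.1, h2.2]
    have intg1y : Integrable (fun p : X × ℝ => (f p.1 - fbar p.1) * p.2) μ := by
      apply int_bdd (C := 2)
        (((hf.comp measurable_fst).sub (hfbar.comp measurable_fst)).mul
          measurable_snd).aestronglyMeasurable
      filter_upwards [hY] with p hp
      have h1 := abs_le.mp (hfb p.1); have h2 := abs_le.mp (hfbarb p.1)
      have hp' := abs_le.mp hp
      simp only [Pi.sub_apply, Pi.add_apply, Pi.mul_apply, Pi.pow_apply, Function.comp_apply, abs_le]
      constructor <;> nlinarith [h1.1, h1.2, h2.1, h2.2, hp'.1, hp'.2]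
    have e0 : Z = fun p : X × ℝ => (f p.1 ^ 2 - fbar p.1 ^ 2)
        - 2 * ((f p.1 - fbar p.1) * p.2) := funext fun p => by simp only [hZ]; ring
    have ekey := key (fun x => f x - fbar x) (hf.sub hfbar) 2
      (fun x => by
        have h1 := abs_le.mp (hfb x); have h2 := abs_le.mp (hfbarb x)
        show |f x - fbar x| ≤ 2
        rw [abs_le]; constructor <;> linarith)
    have intg1f : Integrable (fun p : X × ℝ => (f p.1 - fbar p.1) * fstar p.1) μ := by
      apply int_bdd (C := 2 * (1 + ε))
        (((hf.comp measurable_fst).sub (hfbar.comp measurable_fst)).mul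
          (hfstar.comp measurable_fst)).aestronglyMeasurable
      filter_upwards with p
      simp only [Pi.sub_apply, Pi.add_apply, Pi.mul_apply, Pi.pow_apply, Function.comp_apply]
      rw [abs_mul]
      have h1 := abs_le.mp (hfb p.1); have h2 := abs_le.mp (hfbarb p.1)
      have : |f p.1 - fbar p.1| ≤ 2 := by rw [abs_le]; constructor <;> linarith
      exact mul_le_mul this (hfstarb p.1) (abs_nonneg _) (by linarith)
    rw [e0, integral_sub inta (intg1y.const_mul 2), integral_const_mul, ekey,
      ← integral_const_mul, ← integral_sub inta (intg1f.const_mul 2),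
      ← integral_sub intu intv]
    apply integral_congr_ae
    filter_upwards with p
    ring
  -- Step 2 : ∫ Z² ≤ 8 ∫ (f-f*)² + 8 ε²
  have hZsqint : Integrable (fun p => Z p ^ 2) μ := by
    apply int_bdd (C := 64) (hZmeas.pow_const 2).aestronglyMeasurable
    filter_upwards [hZbd] with p hp
    have := abs_le.mp hp
    simp only [abs_le]
    constructor <;> nlinarith [this.1, this.2]
  have step2 : ∫ p, Z p ^ 2 ∂μ ≤ 8 * ∫ p, (f p.1 - fstar p.1) ^ 2 ∂μ + 8 * ε ^ 2 := by
    set W : X × ℝ → ℝ := fun p =>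
      (f p.1 - fbar p.1) ^ 2 * ((f p.1 + fbar p.1) ^ 2 + 4 * p.2 ^ 2) with hW
    set g2 : X → ℝ := fun x => (f x - fbar x) ^ 2 * (f x + fbar x) with hg2
    have hg2b : ∀ x, |g2 x| ≤ 8 := by
      intro x
      have h1 := abs_le.mp (hfb x); have h2 := abs_le.mp (hfbarb x)
      simp only [hg2, abs_le]
      constructor <;> nlinarith [h1.1, h1.2, h2.1, h2.2]
    have hg2m : Measurable g2 := (((hf.sub hfbar).pow_const 2).mul (hf.add hfbar))
    have intW : Integrable W μ := by
      apply int_bdd (C := 32)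
        ((((hf.comp measurable_fst).sub (hfbar.comp measurable_fst)).pow_const 2).mul
          ((((hf.comp measurable_fst).add (hfbar.comp measurable_fst)).pow_const 2).add
            ((measurable_snd.pow_const 2).const_mul 4))).aestronglyMeasurable
      filter_upwards [hY] with p hp
      have h1 := abs_le.mp (hfb p.1); have h2 := abs_le.mp (hfbarb p.1)
      have hp' := abs_le.mp hp
      simp only [Pi.sub_apply, Pi.add_apply, Pi.mul_apply, Pi.pow_apply, Function.comp_apply, abs_le]
      have hA : (f p.1 - fbar p.1) ^ 2 ≤ 4 := by nlinarith [h1.1, h1.2, h2.1, h2.2]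
      have hB : (f p.1 + fbar p.1) ^ 2 + 4 * p.2 ^ 2 ≤ 8 := by
        nlinarith [h1.1, h1.2, h2.1, h2.2, hp'.1, hp'.2]
      have hB0 : (0:ℝ) ≤ (f p.1 + fbar p.1) ^ 2 + 4 * p.2 ^ 2 := by positivity
      constructor
      · nlinarith [mul_nonneg (sq_nonneg (f p.1 - fbar p.1)) hB0]
      · calc (f p.1 - fbar p.1) ^ 2 * ((f p.1 + fbar p.1) ^ 2 + 4 * p.2 ^ 2) ≤ 4 * 8 :=
            mul_le_mul hA hB hB0 (by norm_num)
          _ = 32 := by norm_num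
    have intg2y : Integrable (fun p : X × ℝ => g2 p.1 * p.2) μ := by
      apply int_bdd (C := 8) ((hg2m.comp measurable_fst).mul measurable_snd).aestronglyMeasurable
      filter_upwards [hY] with p hp
      simp only [Pi.sub_apply, Pi.add_apply, Pi.mul_apply, Pi.pow_apply, Function.comp_apply]
      rw [abs_mul]
      calc |g2 p.1| * |p.2| ≤ 8 * 1 :=
        mul_le_mul (hg2b p.1) hp (abs_nonneg _) (by norm_num)
      _ = 8 := by norm_num
    have intg2f : Integrable (fun p : X × ℝ => g2 p.1 * fstar p.1) μ := by
      apply int_bdd (C := 8 * (1 + ε))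
        ((hg2m.comp measurable_fst).mul (hfstar.comp measurable_fst)).aestronglyMeasurable
      filter_upwards with p
      simp only [Pi.sub_apply, Pi.add_apply, Pi.mul_apply, Pi.pow_apply, Function.comp_apply]
      rw [abs_mul]
      exact mul_le_mul (hg2b p.1) (hfstarb p.1) (abs_nonneg _) (by norm_num)
    have e0 : (fun p => Z p ^ 2) = fun p : X × ℝ => W p - 4 * (g2 p.1 * p.2) :=
      funext fun p => by simp only [hZ, hW, hg2]; ring
    have ekey := key g2 hg2m 8 hg2b
    have e1 : ∫ p, Z p ^ 2 ∂μ = ∫ p, (W p - 4 * (g2 p.1 * fstar p.1)) ∂μ := by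
      rw [e0, integral_sub intW (intg2y.const_mul 4), integral_const_mul, ekey,
        ← integral_const_mul, ← integral_sub intW (intg2f.const_mul 4)]
    rw [e1]
    have mono : ∫ p, (W p - 4 * (g2 p.1 * fstar p.1)) ∂μ
        ≤ ∫ p, (8 * (f p.1 - fstar p.1) ^ 2 + 8 * ε ^ 2) ∂μ := by
      apply integral_mono_ae (intW.sub (intg2f.const_mul 4))
        ((intu.const_mul 8).add (integrable_const _))
      filter_upwards [hY] with p hp
      simp only [hW, hg2, Pi.sub_apply, Pi.add_apply]
      have := ptwise (f p.1) (fbar p.1) (fstar p.1) p.2 ε (hfb p.1) (hfbarb p.1) hp (hmis p.1)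
      linarith
    calc ∫ p, (W p - 4 * (g2 p.1 * fstar p.1)) ∂μ
        ≤ ∫ p, (8 * (f p.1 - fstar p.1) ^ 2 + 8 * ε ^ 2) ∂μ := mono
      _ = 8 * ∫ p, (f p.1 - fstar p.1) ^ 2 ∂μ + 8 * ε ^ 2 := by
          rw [integral_add (intu.const_mul 8) (integrable_const _), integral_const_mul,
            integral_const]
          simp
  -- Step 3 : ∫ (fbar - f*)² ≤ ε²
  have step3 : ∫ p, (fbar p.1 - fstar p.1) ^ 2 ∂μ ≤ ε ^ 2 := by
    calc ∫ p, (fbar p.1 - fstar p.1) ^ 2 ∂μ ≤ ∫ _p : X × ℝ, ε ^ 2 ∂μ := by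
          apply integral_mono intv (integrable_const _)
          intro p
          exact sq_le_sq' (abs_le.mp (hmis p.1)).1 (abs_le.mp (hmis p.1)).2
      _ = ε ^ 2 := by rw [integral_const]; simp
  -- Conclusion
  have hvar : variance Z μ ≤ ∫ p, Z p ^ 2 ∂μ := by
    have := variance_le_expectation_sq (μ := μ) hZmeas.aestronglyMeasurable
    simpa [Pi.pow_apply] using this
  have := step1
  linarith [hvar, step2, step3]
end

section
/- (Failure of the star algorithm under covariate shift) Let C > 1 and ε ∈ (0,1) with √C·ε ≤ 1/2. Let X = [0,1], let D_train put x ∼ Uniform([0,1]) and D_test put x ∼ Uniform([0, 1/C]), with f* ≡ 1/2 in both, and define f̄ ≡ 1/2 + ε and f_bad(x) := 1/2 + √C·ε for x ∈ [0, 1/C] and f_bad(x) := 1/2 otherwise. For α ∈ [0,1] let f_α := (1−α) f_bad + α f̄. Then: (i) the function α ↦ E_train[(f_α(x) − f*(x))²] is, up to the positive factor ε², equal to α² + (1−α)² + 2α(1−α)/√C, which is strictly convex on [0,1] with unique minimizer α = 1/2; and (ii) the minimizing mixture satisfies E_test[(f_{1/2}(x) − f*(x))²] = (1/4)(√C + 1)²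 ε². -/
open MeasureTheory Real

noncomputable section

/-- The bad predictor of the lower-bound construction: `1/2 + √C·ε` on `[0, 1/C]`, `1/2`
elsewhere. -/
def fbad (C ε : ℝ) (x : ℝ) : ℝ :=
  if x ∈ Set.Icc (0 : ℝ) (1 / C) then 1 / 2 + Real.sqrt C * ε else 1 / 2

/-- The mixture `f_α := (1 − α) f_bad + α f̄` where `f̄ ≡ 1/2 + ε`. -/
def fmix (C ε α : ℝ) (x : ℝ) : ℝ :=
  (1 - α) * fbad C ε x + α * (1 / 2 + ε)

/-- The normalized training risk of the mixture as a function of `α`: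
`α² + (1 − α)² + 2α(1 − α)/√C`. -/
def mixRisk (C α : ℝ) : ℝ :=
  α ^ 2 + (1 - α) ^ 2 + 2 * α * (1 - α) / Real.sqrt C

/-- **Failure of the star algorithm under covariate shift.**
Let `C > 1`, `ε ∈ (0,1)` with `√C ε ≤ 1/2`, `D_train` uniform on `[0,1]`, `D_test` uniform on
`[0, 1/C]`, `f* ≡ 1/2`. Then: (i) for `α ∈ [0,1]`, `E_train[(f_α − f*)²] = ε² mixRisk C α`;
the function `mixRisk C` is strictly convex on `[0,1]` with unique minimizer `α = 1/2`; and
(ii) `E_test[(f_{1/2} − f*)²] = (1/4)(√C + 1)² ε²`. -/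
theorem star_algorithm_fails
    (C ε : ℝ) (hC : 1 < C) (hε : ε ∈ Set.Ioo (0 : ℝ) 1)
    (hCe : Real.sqrt C * ε ≤ 1 / 2) :
    (∀ α ∈ Set.Icc (0 : ℝ) 1,
      ∫ x in Set.Icc (0 : ℝ) 1, (fmix C ε α x - 1 / 2) ^ 2 = ε ^ 2 * mixRisk C α) ∧
    StrictConvexOn ℝ (Set.Icc (0 : ℝ) 1) (mixRisk C) ∧
    (∀ α ∈ Set.Icc (0 : ℝ) 1, mixRisk C (1 / 2) ≤ mixRisk C α) ∧
    (∀ α ∈ Set.Icc (0 : ℝ) 1, mixRisk C α = mixRisk C (1 / 2) → α = 1 / 2) ∧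
    (∫ x, (fmix C ε (1 / 2) x - 1 / 2) ^ 2
        ∂(ENNReal.ofReal C • volume.restrict (Set.Icc (0 : ℝ) (1 / C)))
      = 1 / 4 * (Real.sqrt C + 1) ^ 2 * ε ^ 2) := by
  obtain ⟨hε0, hε1⟩ := hε
  have hC0 : (0 : ℝ) < C := lt_trans one_pos hC
  set s := Real.sqrt C with hs_def
  have hs1 : 1 < s := by
    rw [hs_def, show (1:ℝ) = Real.sqrt 1 by simp]
    exact Real.sqrt_lt_sqrt (by norm_num) hC
  have hs0 : 0 < s := lt_trans one_pos hs1
  have hs2 : s ^ 2 = C := Real.sq_sqrt hC0.le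
  have hCinv : (0 : ℝ) < 1 / C := by positivity
  have hCinv1 : 1 / C ≤ 1 := by
    rw [div_le_one hC0]; exact hC.le
  have hsub : Set.Icc (0:ℝ) (1/C) ⊆ Set.Icc (0:ℝ) 1 :=
    Set.Icc_subset_Icc le_rfl hCinv1
  -- quadratic form of mixRisk
  set k := 1 / s with hk_def
  have hk0 : 0 < k := by positivity
  have hk1 : k < 1 := by
    rw [hk_def, div_lt_one hs0]; exact hs1
  have hmr : ∀ α, mixRisk C α = α ^ 2 + (1 - α) ^ 2 + 2 * α * (1 - α) * k := by
    intro α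
    rw [mixRisk, hk_def]; ring
  refine ⟨?_, ?_, ?_, ?_, ?_⟩
  · -- (i) training risk
    intro α hα
    set A : ℝ := ((1 - α) * (s * ε) + α * ε) ^ 2 with hA
    set B : ℝ := (α * ε) ^ 2 with hB
    have hfun : ∀ x, (fmix C ε α x - 1 / 2) ^ 2 =
        (Set.Icc (0:ℝ) (1/C)).indicator (fun _ => A - B) x + B := by
      intro x
      by_cases h : x ∈ Set.Icc (0:ℝ) (1/C)
      · simp only [fmix, fbad, if_pos h, Set.indicator_of_mem h, hA, hB]
        ring
      · simp only [fmix, fbad, if_neg h, Set.indicator_of_notMem h, hA, hB]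
        ring
    have hint : ∫ x in Set.Icc (0:ℝ) 1, (fmix C ε α x - 1 / 2) ^ 2 =
        (∫ x in Set.Icc (0:ℝ) 1, (Set.Icc (0:ℝ) (1/C)).indicator (fun _ => A - B) x)
        + ∫ x in Set.Icc (0:ℝ) 1, B := by
      rw [← integral_add]
      · exact setIntegral_congr_fun measurableSet_Icc (fun x _ => hfun x)
      · exact (integrable_const _).indicator measurableSet_Icc
      · exact integrable_const _
    rw [hint, setIntegral_indicator measurableSet_Icc,
      Set.inter_eq_self_of_subset_right hsub, setIntegral_const, setIntegral_const]
    rw [measureReal_def, measureReal_def, Real.volume_Icc, Real.volume_Icc]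
    rw [ENNReal.toReal_ofReal (by linarith), ENNReal.toReal_ofReal (by positivity)]
    rw [hmr, hA, hB, hk_def]
    have hCne : C ≠ 0 := ne_of_gt hC0
    have hsne : s ≠ 0 := ne_of_gt hs0
    simp only [smul_eq_mul, sub_zero]
    field_simp
    nlinarith [hs2, sq_nonneg s, sq_nonneg ε]
  · -- strict convexity
    refine ⟨convex_Icc 0 1, ?_⟩
    intro x _ y _ hxy a b ha hb hab
    rw [hmr, hmr, hmr]
    have hsq : 0 < (x - y) ^ 2 :=
      lt_of_le_of_ne (sq_nonneg _) (Ne.symm (pow_ne_zero 2 (sub_ne_zero.mpr hxy)))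
    simp only [smul_eq_mul]
    have hb' : b = 1 - a := by linarith
    subst hb'
    nlinarith [mul_pos (mul_pos ha hb) hsq, mul_pos (mul_pos (mul_pos ha hb) hsq) (sub_pos.mpr hk1)]
  · -- 1/2 is a minimizer
    intro α _
    rw [hmr, hmr]
    nlinarith [sq_nonneg (α - 1/2), mul_nonneg (sq_nonneg (α - 1/2)) (sub_pos.mpr hk1).le]
  · -- uniqueness
    intro α _ hαeq
    rw [hmr, hmr] at hαeq
    have h : (2 - 2 * k) * (α - 1/2) ^ 2 = 0 := by nlinarith
    have h2 : (α - 1/2) ^ 2 = 0 := by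
      rcases mul_eq_zero.mp h with h' | h'
      · linarith
      · exact h'
    have := pow_eq_zero_iff (n := 2) (by norm_num) |>.mp h2
    linarith
  · -- (ii) test risk
    rw [integral_smul_measure, ENNReal.toReal_ofReal hC0.le]
    have hcongr : ∫ x in Set.Icc (0:ℝ) (1/C), (fmix C ε (1/2) x - 1 / 2) ^ 2 =
        ∫ x in Set.Icc (0:ℝ) (1/C), ((s + 1) * ε / 2) ^ 2 := by
      refine setIntegral_congr_fun measurableSet_Icc (fun x hx => ?_)
      simp only [fmix, fbad, if_pos hx]
      ring
    rw [hcongr, setIntegral_const, measureReal_def, Real.volume_Icc,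
      ENNReal.toReal_ofReal (by linarith)]
    have hCne : C ≠ 0 := ne_of_gt hC0
    simp only [smul_eq_mul, sub_zero]
    field_simp
    ring


end
end
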